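/- Let n be a positive integer and let θ be a parity-preserving partition in NC(2n) which has exactly two outer blocks. Then there exists a unique partition π ∈ NC(n) such that θ ≪ π^(odd) ∪ K(π)^(even). -/

import Mathlib

open Finset

attribute [local instance] Classical.propDecidable

open scoped ComplexOrder

namespace BBP

/-- Partitions of `{1,…,m}` modeled as `Finpartition`s of `univ : Finset (Fin m)`. -/
abbrev FP (m : ℕ) := Finpartition (Finset.univ : Finset (Fin m))

noncomputable instance (m : ℕ) : Fintype (FP m) :=
  Fintype.ofInjective (fun π : FP m => π.parts) fun a b h => by
    cases a; cases b; simpa using h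

/-- `x` is the minimum of the set `C`. -/
def IsMinOf {m : ℕ} (x : Fin m) (C : Finset (Fin m)) : Prop :=
  x ∈ C ∧ ∀ y ∈ C, x ≤ y

/-- `x` is the maximum of the set `C`. -/
def IsMaxOf {m : ℕ} (x : Fin m) (C : Finset (Fin m)) : Prop :=
  x ∈ C ∧ ∀ y ∈ C, y ≤ x

/-- `a` and `b` lie in one block of `π`. -/
def SameBlock {m : ℕ} (π : FP m) (a b : Fin m) : Prop :=
  ∃ B ∈ π.parts, a ∈ B ∧ b ∈ B

/-- `π` is non-crossing: if `i<j<k<l`, `i,k` in one block and `j,l` in one block,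
then all of them are in one block. -/
def IsNC {m : ℕ} (π : FP m) : Prop :=
  ∀ i j k l : Fin m, i < j → j < k → k < l →
    SameBlock π i k → SameBlock π j l → SameBlock π i j

/-- `A` embraces `B` : `min A ≤ min B` and `max B ≤ max A`. -/
def Embraces {m : ℕ} (A B : Finset (Fin m)) : Prop :=
  ∃ a₁ a₂ b₁ b₂ : Fin m, IsMinOf a₁ A ∧ IsMaxOf a₂ A ∧ IsMinOf b₁ B ∧ IsMaxOf b₂ B ∧
    a₁ ≤ b₁ ∧ b₂ ≤ a₂

/-- `B` strictly embraces `A` : `min B < min A` and `max A < max B`. -/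
def StrictlyEmbraces {m : ℕ} (B A : Finset (Fin m)) : Prop :=
  ∃ b₁ b₂ a₁ a₂ : Fin m, IsMinOf b₁ B ∧ IsMaxOf b₂ B ∧ IsMinOf a₁ A ∧ IsMaxOf a₂ A ∧
    b₁ < a₁ ∧ a₂ < b₂

/-- `A` is an outer block of `π`. -/
def IsOuter {m : ℕ} (π : FP m) (A : Finset (Fin m)) : Prop :=
  A ∈ π.parts ∧ ¬ ∃ B ∈ π.parts, StrictlyEmbraces B A

/-- The number `|π|_out` of outer blocks of `π`. -/
noncomputable def numOuter {m : ℕ} (π : FP m) : ℕ :=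
  (π.parts.filter fun A => IsOuter π A).card

/-- Reversed refinement order: every block of `ρ` is a union of blocks of `π`. -/
def Refines {m : ℕ} (π ρ : FP m) : Prop :=
  ∀ B ∈ π.parts, ∃ C ∈ ρ.parts, B ⊆ C

/-- The partial order `π ≪ ρ`. -/
def Ll {m : ℕ} (π ρ : FP m) : Prop :=
  Refines π ρ ∧
    ∀ C ∈ ρ.parts, ∃ B ∈ π.parts, ∃ x y : Fin m,
      IsMinOf x C ∧ IsMaxOf y C ∧ x ∈ B ∧ y ∈ B

/-- The partition `1ₙ` of `{1,…,n+1}` with a single block. -/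
noncomputable def fullPart (n : ℕ) : FP (n+1) :=
  Finpartition.indiscrete (by simpa using (Finset.univ_nonempty (α := Fin (n+1))).ne_empty)

/-- `π` is an interval partition. -/
def IsIntervalPartition {m : ℕ} (π : FP m) : Prop :=
  ∀ B ∈ π.parts, ∀ x ∈ B, ∀ z ∈ B, ∀ y : Fin m, x ≤ y → y ≤ z → y ∈ B

/-- `σ` is the permutation associated to `π` : on each block `{b₁ < ⋯ < b_q}` it is the
cycle `b₁ ↦ b₂ ↦ ⋯ ↦ b_q ↦ b₁`. -/
def IsAssocPerm {m : ℕ} (π : FP m) (σ : Equiv.Perm (Fin m)) : Prop :=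
  ∀ B ∈ π.parts, ∀ b ∈ B, σ b ∈ B ∧
    ((b < σ b ∧ ∀ x ∈ B, b < x → σ b ≤ x) ∨ (IsMaxOf b B ∧ IsMinOf (σ b) B))

/-- `κ` is the Kreweras complement of `π`, characterized by `P_κ = P_π⁻¹ ∘ P_{1ₙ}`,
where `P_{1ₙ}` is the cycle `1 ↦ 2 ↦ ⋯ ↦ n ↦ 1` (i.e. `finRotate`). -/
def IsKrewerasPair {m : ℕ} (π κ : FP m) : Prop :=
  ∃ σπ σκ : Equiv.Perm (Fin m), IsAssocPerm π σπ ∧ IsAssocPerm κ σκ ∧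
    σκ = σπ⁻¹ * finRotate m

/-- the element `2a-1` of `{1,…,2n}`, in `Fin (2n)` (0-indexed). -/
def oddEmb {n : ℕ} (a : Fin n) : Fin (2*n) := ⟨2*a.val, by have := a.isLt; omega⟩

/-- the element `2a` of `{1,…,2n}`, in `Fin (2n)` (0-indexed). -/
def evenEmb {n : ℕ} (a : Fin n) : Fin (2*n) := ⟨2*a.val + 1, by have := a.isLt; omega⟩

/-- `θ = π^(odd) ∪ ρ^(even)` : the blocks of `θ` are the sets `{2a-1 : a ∈ A}` for `A`
a block of `π` and the sets `{2b : b ∈ B}` for `B` a block of `ρ`. -/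
def IsOddEvenJoin {n : ℕ} (π ρ : FP n) (θ : FP (2*n)) : Prop :=
  θ.parts = π.parts.image (fun B => B.image oddEmb) ∪
    ρ.parts.image (fun B => B.image evenEmb)

/-- a block consisting of odd elements of `{1,…,2n}` (even 0-indexed values). -/
def OddBlock {m : ℕ} (B : Finset (Fin m)) : Prop := ∀ x ∈ B, x.val % 2 = 0

/-- a block consisting of even elements of `{1,…,2n}` (odd 0-indexed values). -/
def EvenBlock {m : ℕ} (B : Finset (Fin m)) : Prop := ∀ x ∈ B, x.val % 2 = 1

/-- every block of `θ` is contained in the odds or in the evens. -/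
def ParityPreserving {m : ℕ} (θ : FP m) : Prop :=
  ∀ B ∈ θ.parts, OddBlock B ∨ EvenBlock B

def OppositeParity {m : ℕ} (A B : Finset (Fin m)) : Prop :=
  (OddBlock A ∧ EvenBlock B) ∨ (EvenBlock A ∧ OddBlock B)

def SameParity {m : ℕ} (A B : Finset (Fin m)) : Prop :=
  (OddBlock A ∧ OddBlock B) ∨ (EvenBlock A ∧ EvenBlock B)

/-- `P = Parent_θ(A)` : the unique block `P ≠ A` of `θ` embracing `A` such that every
block `A' ≠ A` of `θ` embracing `A` also embraces `P`. -/
def IsParent {m : ℕ} (θ : FP m) (A P : Finset (Fin m)) : Prop :=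
  P ∈ θ.parts ∧ P ≠ A ∧ Embraces P A ∧
    ∀ A' ∈ θ.parts, A' ≠ A → Embraces A' A → Embraces A' P

/-- `θ` has exactly two outer blocks. -/
def ExactlyTwoOuterBlocks {m : ℕ} (θ : FP m) : Prop :=
  ∃ M ∈ θ.parts, ∃ N ∈ θ.parts, M ≠ N ∧ IsOuter θ M ∧ IsOuter θ N ∧
    ∀ A ∈ θ.parts, IsOuter θ A → A = M ∨ A = N

/-- A series in `ℂ₀⟨⟨z₁,…,z_k⟩⟩`, given by its family of coefficients: `f n w` is the
coefficient of `z_{w 0} z_{w 1} ⋯ z_{w n}` (a word of length `n+1 ≥ 1`). -/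
abbrev NCSeries (k : ℕ) := (n : ℕ) → (Fin (n+1) → Fin k) → ℂ

/-- The coefficient `Cf_{w|B}(f)` of the restriction of the word `w` to the set `B`,
listing the elements of `B` in increasing order.  (Equals `1` for `B = ∅`.) -/
noncomputable def partCoeff {k m : ℕ} (f : NCSeries k) (w : Fin (m+1) → Fin k)
    (B : Finset (Fin (m+1))) : ℂ :=
  if h : B.Nonempty then
    f (B.card - 1) (fun j =>
      w ((B.orderIsoOfFin (Nat.succ_pred_eq_of_pos (Finset.card_pos.mpr h)).symm j).1))
  else 1

/-- The generalized coefficient `Cf_{w;π}(f) = ∏_{B block of π} Cf_{w|B}(f)`. -/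
noncomputable def genCoeff {k m : ℕ} (f : NCSeries k) (w : Fin (m+1) → Fin k)
    (π : FP (m+1)) : ℂ :=
  ∏ B ∈ π.parts, partCoeff f w B

/-- Linear functionals on `ℂ⟨X₁,…,X_k⟩`. -/
abbrev Dist (k : ℕ) := FreeAlgebra ℂ (Fin k) →ₗ[ℂ] ℂ

/-- `μ ∈ D_alg(k)` : `μ` is normalized by `μ(1) = 1`. -/
def IsDalg {k : ℕ} (μ : Dist k) : Prop := μ 1 = 1

/-- The moment series `M_μ`, with `(momentSeries μ) n w = μ (X_{w 0} ⋯ X_{w n})`. -/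
noncomputable def momentSeries {k : ℕ} (μ : Dist k) : NCSeries k :=
  fun _ w => μ ((List.ofFn fun j => FreeAlgebra.ι ℂ (w j)).prod)

/-- `f = R_μ` : the moments of `μ` are obtained from `f` by summation over all
non-crossing partitions. -/
def IsRTransform {k : ℕ} (μ : Dist k) (f : NCSeries k) : Prop :=
  ∀ (n : ℕ) (w : Fin (n+1) → Fin k),
    momentSeries μ n w = ∑ π : FP (n+1), if IsNC π then genCoeff f w π else 0

/-- `g = η_μ` : the moments of `μ` are obtained from `g` by summation over all
interval partitions. -/
def IsEtaSeries {k : ℕ} (μ : Dist k) (g : NCSeries k) : Prop :=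
  ∀ (n : ℕ) (w : Fin (n+1) → Fin k),
    momentSeries μ n w = ∑ π : FP (n+1), if IsIntervalPartition π then genCoeff g w π else 0

/-- `μ ∈ D_c(k)` : `μ` is the joint distribution of a `k`-tuple of selfadjoint elements
with respect to a state on a unital C*-algebra. -/
def IsDc {k : ℕ} (μ : Dist k) : Prop :=
  IsDalg μ ∧
  ∃ (A : Type) (_ : NormedRing A) (_ : StarRing A) (_ : CStarRing A)
    (_ : NormedAlgebra ℂ A) (_ : StarModule ℂ A) (_ : CompleteSpace A)
    (φ : A →ₗ[ℂ] ℂ) (x : Fin k → A),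
      φ 1 = 1 ∧ (∀ a : A, 0 ≤ φ (star a * a)) ∧ (∀ i, IsSelfAdjoint (x i)) ∧
      ∀ (n : ℕ) (w : Fin (n+1) → Fin k),
        momentSeries μ n w = φ ((List.ofFn fun j => x (w j)).prod)

/-- convergence in moments. -/
def ConvInMoments {k : ℕ} (μseq : ℕ → Dist k) (μ : Dist k) : Prop :=
  ∀ P : FreeAlgebra ℂ (Fin k),
    Filter.Tendsto (fun N => μseq N P) Filter.atTop (nhds (μ P))

/-- coefficientwise convergence of series. -/
def ConvCoeffwise {k : ℕ} (fseq : ℕ → NCSeries k) (f : NCSeries k) : Prop :=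
  ∀ (n : ℕ) (w : Fin (n+1) → Fin k),
    Filter.Tendsto (fun N => fseq N n w) Filter.atTop (nhds (f n w))

/-- `ν` is the `p`-fold free additive convolution `μ ⊞ ⋯ ⊞ μ`, i.e. `R_ν = p · R_μ`. -/
def IsNFoldFree {k : ℕ} (p : ℕ) (μ ν : Dist k) : Prop :=
  ∃ f : NCSeries k, IsRTransform μ f ∧ IsRTransform ν (fun n w => (p : ℂ) * f n w)

/-- `ν` is the `p`-fold Boolean convolution `μ ⊎ ⋯ ⊎ μ`, i.e. `η_ν = p · η_μ`. -/
def IsNFoldBool {k : ℕ} (p : ℕ) (μ ν : Dist k) : Prop :=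
  ∃ g : NCSeries k, IsEtaSeries μ g ∧ IsEtaSeries ν (fun n w => (p : ℂ) * g n w)

/-- `ν = 𝔹(μ)` : the Boolean Bercovici–Pata bijection, `R_{𝔹(μ)} = η_μ`. -/
def IsBP {k : ℕ} (μ ν : Dist k) : Prop :=
  ∃ f : NCSeries k, IsEtaSeries μ f ∧ IsRTransform ν f

/-- `μ ∈ D_c(k)` is infinitely divisible with respect to `⊞`. -/
def IsInfDiv {k : ℕ} (μ : Dist k) : Prop :=
  IsDc μ ∧ ∀ N : ℕ, 0 < N → ∃ ν : Dist k, IsDc ν ∧ IsNFoldFree N ν μ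

/-- `g = Reta(f)`, i.e. there is `μ ∈ D_alg(k)` with `f = R_μ` and `g = η_μ`. -/
def RetaRel {k : ℕ} (f g : NCSeries k) : Prop :=
  ∃ μ : Dist k, IsDalg μ ∧ IsRTransform μ f ∧ IsEtaSeries μ g


/-!
Call `ψ` admissible if it is non-crossing, parity preserving, has exactly two outer blocks and
`θ ≪ ψ`. Merging a block with its parent when both have the same parity keeps `ψ` admissible, so
in an admissible partition `φ` with the fewest blocks every parent has the opposite parity. Then
every gap between adjacent elements of a block of `φ` is spanned exactly by one block
(`GapFilled`), and reading off cyclic successors shows that the even part of `φ` is the Kreweras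
complement of its odd part.

Conversely, `π^(odd) ∪ K(π)^(even)` is always gap-filled, hence non-crossing. For any solution
`φ'`, merging a block with its parent never joins two blocks lying in different blocks of `φ'`, so
some closed admissible `φ` refines every solution; and a gap-filled partition refining a
non-crossing, parity-preserving `φ'` with `θ ≪ φ'` equals `φ'`. Hence all solutions coincide.
-/

section LinearOrder

variable {α : Type*} [LinearOrder α]

def Adjacent (E : Finset α) (x y : α) : Prop :=
  x ∈ E ∧ y ∈ E ∧ x < y ∧ ∀ w ∈ E, ¬(x < w ∧ w < y)

/-- Point-based forms of `StrictlyEmbraces` and `Embraces` (see `strictlyEmbraces_iff`). -/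
def StrictlyEncloses (B A : Finset α) : Prop :=
  ∃ b₁ ∈ B, ∃ b₂ ∈ B, ∀ a ∈ A, b₁ < a ∧ a < b₂

def Encloses (B A : Finset α) : Prop :=
  ∃ b₁ ∈ B, ∃ b₂ ∈ B, ∀ a ∈ A, b₁ ≤ a ∧ a ≤ b₂

lemma exists_adjacent_around {E : Finset α} {a b j₁ j₂ : α} (ha : a ∈ E) (hb : b ∈ E)
    (haj : a < j₁) (hj : j₁ ≤ j₂) (hjb : j₂ < b) (hgap : ∀ w ∈ E, ¬(j₁ ≤ w ∧ w ≤ j₂)) :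
    ∃ w₁ w₂, Adjacent E w₁ w₂ ∧ a ≤ w₁ ∧ w₁ < j₁ ∧ j₂ < w₂ ∧ w₂ ≤ b := by
  have hlo : (E.filter (· < j₁)).Nonempty := ⟨a, mem_filter.2 ⟨ha, haj⟩⟩
  have hhi : (E.filter (j₂ < ·)).Nonempty := ⟨b, mem_filter.2 ⟨hb, hjb⟩⟩
  obtain ⟨hw₁, hw₁j⟩ := mem_filter.1 ((E.filter (· < j₁)).max'_mem hlo)
  obtain ⟨hw₂, hw₂j⟩ := mem_filter.1 ((E.filter (j₂ < ·)).min'_mem hhi)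
  refine ⟨_, _, ⟨hw₁, hw₂, hw₁j.trans (hj.trans_lt hw₂j), fun w hw ⟨h₁, h₂⟩ => ?_⟩,
    le_max' _ _ (mem_filter.2 ⟨ha, haj⟩), hw₁j, hw₂j, min'_le _ _ (mem_filter.2 ⟨hb, hjb⟩)⟩
  refine hgap w hw ⟨not_lt.1 fun h => ?_, not_lt.1 fun h => ?_⟩
  · exact h₁.not_ge (le_max' _ _ (mem_filter.2 ⟨hw, h⟩))
  · exact h₂.not_ge (min'_le _ _ (mem_filter.2 ⟨hw, h⟩))

lemma StrictlyEncloses.trans {X P A : Finset α} (hXP : StrictlyEncloses X P)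
    (hPA : StrictlyEncloses P A) : StrictlyEncloses X A := by
  obtain ⟨x₁, hx₁, x₂, hx₂, hX⟩ := hXP
  obtain ⟨p₁, hp₁, p₂, hp₂, hP⟩ := hPA
  exact ⟨x₁, hx₁, x₂, hx₂, fun a ha =>
    ⟨(hX p₁ hp₁).1.trans (hP a ha).1, (hP a ha).2.trans (hX p₂ hp₂).2⟩⟩

lemma StrictlyEncloses.mono {B B' A : Finset α} (h : StrictlyEncloses B A) (hB : B ⊆ B') :
    StrictlyEncloses B' A := by
  obtain ⟨b₁, hb₁, b₂, hb₂, hB'⟩ := h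
  exact ⟨b₁, hB hb₁, b₂, hB hb₂, hB'⟩

lemma StrictlyEncloses.irrefl (A : Finset α) : ¬ StrictlyEncloses A A := by
  rintro ⟨a, ha, _, _, h⟩
  exact lt_irrefl a (h a ha).1

end LinearOrder

section Partition

variable {m : ℕ} {ψ : FP m} {A B C P : Finset (Fin m)}

lemma isMinOf_min' (hB : B.Nonempty) : IsMinOf (B.min' hB) B :=
  ⟨B.min'_mem hB, fun y hy => B.min'_le y hy⟩

lemma isMaxOf_max' (hB : B.Nonempty) : IsMaxOf (B.max' hB) B :=
  ⟨B.max'_mem hB, fun y hy => B.le_max' y hy⟩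

lemma part_mem_parts (ψ : FP m) (x : Fin m) : ψ.part x ∈ ψ.parts := ψ.part_mem.2 (mem_univ x)

lemma self_mem_part (ψ : FP m) (x : Fin m) : x ∈ ψ.part x := ψ.mem_part (mem_univ x)

lemma sameBlock_iff_mem_part {a b : Fin m} : SameBlock ψ a b ↔ b ∈ ψ.part a := by
  rw [Finpartition.mem_part_iff_exists]
  exact ⟨fun ⟨B, hB, ha, hb⟩ => ⟨B, hB, hb, ha⟩, fun ⟨B, hB, hb, ha⟩ => ⟨B, hB, ha, hb⟩⟩

lemma ne_of_mem_of_mem (hB : B ∈ ψ.parts) (hC : C ∈ ψ.parts) (hBC : B ≠ C) {x y : Fin m}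
    (hx : x ∈ B) (hy : y ∈ C) : x ≠ y := by
  rintro rfl
  exact hBC (ψ.eq_of_mem_parts hB hC hx hy)

lemma IsNC.eq_of_crossing (hNC : IsNC ψ) (hB : B ∈ ψ.parts) (hC : C ∈ ψ.parts)
    {i j k l : Fin m} (hi : i ∈ B) (hj : j ∈ C) (hk : k ∈ B) (hl : l ∈ C)
    (hij : i < j) (hjk : j < k) (hkl : k < l) : B = C := by
  obtain ⟨D, hD, hiD, hjD⟩ := hNC i j k l hij hjk hkl ⟨B, hB, hi, hk⟩ ⟨C, hC, hj, hl⟩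
  exact (ψ.eq_of_mem_parts hD hB hiD hi).symm.trans (ψ.eq_of_mem_parts hD hC hjD hj)

lemma IsNC.nested (hNC : IsNC ψ) (hB : B ∈ ψ.parts) (hC : C ∈ ψ.parts) (hBC : B ≠ C)
    {c₁ c₂ g : Fin m} (hc₁ : c₁ ∈ C) (hc₂ : c₂ ∈ C) (hg : g ∈ B) (h₁ : c₁ < g) (h₂ : g < c₂) :
    ∀ x ∈ B, c₁ < x ∧ x < c₂ := by
  intro x hx
  constructor
  · refine lt_of_le_of_ne (not_lt.1 fun hlt => hBC ?_) (ne_of_mem_of_mem hC hB hBC.symm hc₁ hx)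
    exact hNC.eq_of_crossing hB hC hx hc₁ hg hc₂ hlt h₁ h₂
  · refine lt_of_le_of_ne (not_lt.1 fun hlt => hBC ?_) (ne_of_mem_of_mem hB hC hBC hx hc₂)
    exact (hNC.eq_of_crossing hC hB hc₁ hg hc₂ hx h₁ h₂ hlt).symm

lemma IsNC.strictlyEncloses (hNC : IsNC ψ) (hB : B ∈ ψ.parts) (hC : C ∈ ψ.parts) (hBC : B ≠ C)
    {c₁ c₂ g : Fin m} (hc₁ : c₁ ∈ C) (hc₂ : c₂ ∈ C) (hg : g ∈ B) (h₁ : c₁ < g) (h₂ : g < c₂) :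
    StrictlyEncloses C B :=
  ⟨c₁, hc₁, c₂, hc₂, hNC.nested hB hC hBC hc₁ hc₂ hg h₁ h₂⟩

lemma IsNC.exists_adjacent_around (hNC : IsNC ψ) (hC : C ∈ ψ.parts) (hB : B ∈ ψ.parts)
    (hCB : C ≠ B) (hAB : A ⊆ B) (hCA : StrictlyEncloses C A) {a₁ a₂ : Fin m} (ha₁ : IsMinOf a₁ A)
    (ha₂ : IsMaxOf a₂ A) : ∃ u v, Adjacent C u v ∧ u < a₁ ∧ a₂ < v := by
  obtain ⟨c₁, hc₁, c₂, hc₂, h⟩ := hCA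
  have hno : ∀ w ∈ C, ¬(a₁ ≤ w ∧ w ≤ a₂) := by
    rintro w hw ⟨h₁, h₂⟩
    have h₁' := lt_of_le_of_ne h₁ (ne_of_mem_of_mem hB hC hCB.symm (hAB ha₁.1) hw)
    have h₂' := lt_of_le_of_ne h₂ (ne_of_mem_of_mem hC hB hCB hw (hAB ha₂.1))
    exact hCB (hNC.eq_of_crossing hC hB hc₁ (hAB ha₁.1) hw (hAB ha₂.1) (h a₁ ha₁.1).1 h₁' h₂')
  obtain ⟨u, v, huv, -, hu, hv, -⟩ := BBP.exists_adjacent_around hc₁ hc₂ (h a₁ ha₁.1).1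
    (ha₁.2 a₂ ha₂.1) (h a₂ ha₂.1).2 hno
  exact ⟨u, v, huv, hu, hv⟩

lemma strictlyEmbraces_iff (hB : B.Nonempty) (hA : A.Nonempty) :
    StrictlyEmbraces B A ↔ StrictlyEncloses B A := by
  constructor
  · rintro ⟨b₁, b₂, a₁, a₂, hb₁, hb₂, ha₁, ha₂, h₁, h₂⟩
    exact ⟨b₁, hb₁.1, b₂, hb₂.1, fun a ha =>
      ⟨h₁.trans_le (ha₁.2 a ha), (ha₂.2 a ha).trans_lt h₂⟩⟩
  · rintro ⟨b₁, hb₁, b₂, hb₂, h⟩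
    refine ⟨_, _, _, _, isMinOf_min' hB, isMaxOf_max' hB, isMinOf_min' hA, isMaxOf_max' hA, ?_, ?_⟩
    · exact (B.min'_le b₁ hb₁).trans_lt (h _ (A.min'_mem hA)).1
    · exact (h _ (A.max'_mem hA)).2.trans_le (B.le_max' b₂ hb₂)

lemma isOuter_iff (hA : A ∈ ψ.parts) :
    IsOuter ψ A ↔ ∀ B ∈ ψ.parts, ¬ StrictlyEncloses B A := by
  simp only [IsOuter, hA, true_and, not_exists, not_and]
  exact forall₂_congr fun B hB => by
    rw [strictlyEmbraces_iff (ψ.nonempty_of_mem_parts hB) (ψ.nonempty_of_mem_parts hA)]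

structure IsParentOf (ψ : FP m) (A P : Finset (Fin m)) : Prop where
  mem : P ∈ ψ.parts
  encloses : StrictlyEncloses P A
  innermost : ∀ B ∈ ψ.parts, StrictlyEncloses B A → Encloses B P

/-- The parent is the enclosing block with the largest minimum. -/
lemma exists_isParentOf (hNC : IsNC ψ) (hA : A ∈ ψ.parts)
    (h : ∃ B ∈ ψ.parts, StrictlyEncloses B A) : ∃ P, IsParentOf ψ A P := by
  obtain ⟨B₀, hB₀, hB₀A⟩ := h
  obtain ⟨P, hP, hmax⟩ := exists_max_image (ψ.parts.filter (StrictlyEncloses · A)) Finset.min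
    ⟨B₀, mem_filter.2 ⟨hB₀, hB₀A⟩⟩
  obtain ⟨hPmem, hPA⟩ := mem_filter.1 hP
  refine ⟨P, hPmem, hPA, fun B hB hBA => ?_⟩
  have hPne := ψ.nonempty_of_mem_parts hPmem
  have hBne := ψ.nonempty_of_mem_parts hB
  by_cases hBP : B = P
  · subst hBP
    exact ⟨_, B.min'_mem hPne, _, B.max'_mem hPne, fun p hp => ⟨B.min'_le p hp, B.le_max' p hp⟩⟩
  have hle : B.min' hBne ≤ P.min' hPne := by
    have := hmax B (mem_filter.2 ⟨hB, hBA⟩)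
    rwa [← coe_min' hBne, ← coe_min' hPne, WithTop.coe_le_coe] at this
  have hlt := lt_of_le_of_ne hle (ne_of_mem_of_mem hB hPmem hBP (B.min'_mem _) (P.min'_mem _))
  obtain ⟨a, ha⟩ := ψ.nonempty_of_mem_parts hA
  obtain ⟨p₁, hp₁, _, _, hPA'⟩ := hPA
  obtain ⟨b₁, hb₁, b₂, hb₂, hBA'⟩ := hBA
  have hPb₂ : P.min' hPne < b₂ := ((P.min'_le p₁ hp₁).trans_lt (hPA' a ha).1).trans (hBA' a ha).2
  have hnest := hNC.nested hPmem hB (Ne.symm hBP) (B.min'_mem hBne) hb₂ (P.min'_mem hPne) hlt hPb₂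
  exact ⟨_, B.min'_mem hBne, b₂, hb₂, fun p hp => ⟨(hnest p hp).1.le, (hnest p hp).2.le⟩⟩

end Partition

section Parity

variable {m : ℕ} {ψ : FP m} {A B P : Finset (Fin m)}

lemma ParityPreserving.mod_two_eq (hpar : ParityPreserving ψ) (hB : B ∈ ψ.parts) {x y : Fin m}
    (hx : x ∈ B) (hy : y ∈ B) : x.val % 2 = y.val % 2 := by
  rcases hpar B hB with h | h <;> rw [h x hx, h y hy]

lemma SameParity.mod_two_eq (h : SameParity A P) {a p : Fin m} (ha : a ∈ A) (hp : p ∈ P) :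
    a.val % 2 = p.val % 2 := by
  rcases h with ⟨hA, hP⟩ | ⟨hA, hP⟩ <;> rw [hA a ha, hP p hp]

lemma mod_two_ne_of_not_sameParity (hpar : ParityPreserving ψ) (hA : A ∈ ψ.parts)
    (hP : P ∈ ψ.parts) (h : ¬ SameParity A P) {a p : Fin m} (ha : a ∈ A) (hp : p ∈ P) :
    a.val % 2 ≠ p.val % 2 := by
  intro hap
  rcases hpar A hA with hA' | hA' <;> rcases hpar P hP with hP' | hP'
  · exact h (Or.inl ⟨hA', hP'⟩)
  · have := hA' a ha; have := hP' p hp; omega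
  · have := hA' a ha; have := hP' p hp; omega
  · exact h (Or.inr ⟨hA', hP'⟩)

end Parity

section TwoOuterBlocks

variable {m : ℕ} {ψ : FP m} {A : Finset (Fin m)}

lemma isOuter_part_zero (hm : 0 < m) (ψ : FP m) : IsOuter ψ (ψ.part ⟨0, hm⟩) := by
  refine (isOuter_iff (part_mem_parts ψ _)).2 fun B _ ⟨b₁, _, _, _, h⟩ => ?_
  have h' : b₁.val < 0 := (h _ (self_mem_part ψ _)).1
  omega

lemma isOuter_part_last (hm : 0 < m) (ψ : FP m) : IsOuter ψ (ψ.part ⟨m - 1, by omega⟩) := by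
  refine (isOuter_iff (part_mem_parts ψ _)).2 fun B _ ⟨_, _, b₂, _, h⟩ => ?_
  have h' : m - 1 < b₂.val := (h _ (self_mem_part ψ _)).2
  omega

lemma part_zero_ne_part_last (hpar : ParityPreserving ψ) (hm : 0 < m) (heven : m % 2 = 0) :
    ψ.part ⟨0, hm⟩ ≠ ψ.part ⟨m - 1, by omega⟩ := by
  intro h
  have := hpar.mod_two_eq (part_mem_parts ψ _) (self_mem_part ψ ⟨0, hm⟩)
    (h ▸ self_mem_part ψ ⟨m - 1, by omega⟩)
  simp only at this
  omega

lemma ExactlyTwoOuterBlocks.eq_or_eq (h2 : ExactlyTwoOuterBlocks ψ) (hpar : ParityPreserving ψ)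
    (hm : 0 < m) (heven : m % 2 = 0) (hA : A ∈ ψ.parts) (hout : IsOuter ψ A) :
    A = ψ.part ⟨0, hm⟩ ∨ A = ψ.part ⟨m - 1, by omega⟩ := by
  obtain ⟨M, -, N, -, hMN, -, -, hcl⟩ := h2
  have hne := part_zero_ne_part_last hpar hm heven
  rcases hcl _ (part_mem_parts ψ _) (isOuter_part_zero hm ψ) with h0 | h0 <;>
  rcases hcl _ (part_mem_parts ψ _) (isOuter_part_last hm ψ) with h1 | h1 <;>
  rcases hcl A hA hout with h | h <;> simp_all

lemma exactlyTwoOuterBlocks_of (hpar : ParityPreserving ψ) (hm : 0 < m) (heven : m % 2 = 0)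
    (h : ∀ C ∈ ψ.parts, IsOuter ψ C → ⟨0, hm⟩ ∈ C ∨ ⟨m - 1, by omega⟩ ∈ C) :
    ExactlyTwoOuterBlocks ψ := by
  refine ⟨_, part_mem_parts ψ _, _, part_mem_parts ψ _, part_zero_ne_part_last hpar hm heven,
    isOuter_part_zero hm ψ, isOuter_part_last hm ψ, fun C hC hout => ?_⟩
  rcases h C hC hout with h' | h'
  · exact Or.inl (ψ.part_eq_of_mem hC h').symm
  · exact Or.inr (ψ.part_eq_of_mem hC h').symm

/-- The enclosing block with the smallest minimum is outer. -/
lemma exists_isOuter_strictlyEncloses (hA : A ∈ ψ.parts) (hA' : ¬ IsOuter ψ A) :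
    ∃ B ∈ ψ.parts, IsOuter ψ B ∧ StrictlyEncloses B A := by
  simp only [isOuter_iff hA, not_forall, not_not, exists_prop] at hA'
  obtain ⟨B₀, hB₀, hB₀A⟩ := hA'
  obtain ⟨B, hB, hmin⟩ := exists_min_image (ψ.parts.filter (StrictlyEncloses · A)) Finset.min
    ⟨B₀, mem_filter.2 ⟨hB₀, hB₀A⟩⟩
  obtain ⟨hBmem, hBA⟩ := mem_filter.1 hB
  refine ⟨B, hBmem, (isOuter_iff hBmem).2 fun C hC ⟨c₁, hc₁, c₂, hc₂, hCB⟩ => ?_, hBA⟩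
  have hBne := ψ.nonempty_of_mem_parts hBmem
  have hle := hmin C (mem_filter.2 ⟨hC, StrictlyEncloses.trans ⟨c₁, hc₁, c₂, hc₂, hCB⟩ hBA⟩)
  rw [← coe_min' hBne] at hle
  exact (lt_irrefl _ ((min_le hc₁).trans_lt
    ((WithTop.coe_lt_coe.2 (hCB _ (B.min'_mem hBne)).1).trans_le hle)))

lemma exists_isParentOf_of_not_isOuter (hNC : IsNC ψ) (hA : A ∈ ψ.parts) (hA' : ¬ IsOuter ψ A) :
    ∃ P, IsParentOf ψ A P := by
  obtain ⟨B, hB, -, hBA⟩ := exists_isOuter_strictlyEncloses hA hA'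
  exact exists_isParentOf hNC hA ⟨B, hB, hBA⟩

/-- A block strictly between the two outer blocks would be outer or enclosed by an outer block. -/
lemma min_part_last_eq_succ_max_part_zero (hNC : IsNC ψ) (hpar : ParityPreserving ψ)
    (h2 : ExactlyTwoOuterBlocks ψ) (hm : 0 < m) (heven : m % 2 = 0) {x y : Fin m}
    (hx : IsMaxOf x (ψ.part ⟨0, hm⟩))
    (hy : IsMinOf y (ψ.part ⟨m - 1, by omega⟩)) : y.val = x.val + 1 := by
  set M := ψ.part ⟨0, hm⟩
  set N := ψ.part ⟨m - 1, by omega⟩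
  have hM := part_mem_parts ψ ⟨0, hm⟩
  have hN := part_mem_parts ψ ⟨m - 1, by omega⟩
  have hMN : M ≠ N := part_zero_ne_part_last hpar hm heven
  have hxy : x < y := by
    refine lt_of_le_of_ne (not_lt.1 fun hyx => hMN ?_) (ne_of_mem_of_mem hM hN hMN hx.1 hy.1)
    have h0 := ne_of_mem_of_mem hM hN hMN (self_mem_part ψ _) hy.1
    have h1 := ne_of_mem_of_mem hM hN hMN hx.1 (self_mem_part ψ ⟨m - 1, by omega⟩)
    refine hNC.eq_of_crossing hM hN (self_mem_part ψ _) hy.1 hx.1 (self_mem_part ψ _) ?_ hyx ?_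
    · exact lt_of_le_of_ne (Nat.zero_le _) h0
    · exact lt_of_le_of_ne (Nat.le_sub_one_of_lt x.isLt) h1
  by_contra hne
  set z : Fin m := ⟨x.val + 1, by have := y.isLt; omega⟩
  have hxz : x < z := Nat.lt_succ_self _
  have hzy : z < y := by have : x.val < y.val := hxy; show x.val + 1 < y.val; omega
  have hZ := part_mem_parts ψ z
  have hZM : ψ.part z ≠ M := fun h => hxz.not_ge (hx.2 z (h ▸ self_mem_part ψ z))
  have hZN : ψ.part z ≠ N := fun h => hzy.not_ge (hy.2 z (h ▸ self_mem_part ψ z))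
  by_cases hout : IsOuter ψ (ψ.part z)
  · rcases h2.eq_or_eq hpar hm heven hZ hout with h | h
    exacts [hZM h, hZN h]
  obtain ⟨B, hB, hBout, b₁, hb₁, b₂, hb₂, hBZ⟩ := exists_isOuter_strictlyEncloses hZ hout
  rcases h2.eq_or_eq hpar hm heven hB hBout with rfl | rfl
  · exact (hBZ z (self_mem_part ψ z)).2.not_ge ((hx.2 b₂ hb₂).trans hxz.le) |>.elim
  · exact (hBZ z (self_mem_part ψ z)).1.not_ge (hzy.le.trans (hy.2 b₁ hb₁)) |>.elim

end TwoOuterBlocks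

section Merge

variable {m : ℕ} {θ ψ : FP m} {A B C P : Finset (Fin m)}

lemma Refines.trans {π ρ σ : FP m} (h₁ : Refines π ρ) (h₂ : Refines ρ σ) : Refines π σ := by
  intro B hB
  obtain ⟨C, hC, hBC⟩ := h₁ B hB
  obtain ⟨D, hD, hCD⟩ := h₂ C hC
  exact ⟨D, hD, hBC.trans hCD⟩

lemma StrictlyEncloses.union {X : Finset (Fin m)} (hXP : StrictlyEncloses X P)
    (hPA : StrictlyEncloses P A) : StrictlyEncloses X (A ∪ P) := by
  obtain ⟨x₁, hx₁, x₂, hx₂, hX⟩ := hXP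
  refine ⟨x₁, hx₁, x₂, hx₂, fun a ha => (mem_union.1 ha).elim (fun haA => ?_) (hX a)⟩
  obtain ⟨p₁, hp₁, p₂, hp₂, hP⟩ := hPA
  exact ⟨(hX p₁ hp₁).1.trans (hP a haA).1, (hP a haA).2.trans (hX p₂ hp₂).2⟩

lemma IsMinOf.union_of_strictlyEncloses {x : Fin m} (hx : IsMinOf x P)
    (hPA : StrictlyEncloses P A) : IsMinOf x (A ∪ P) := by
  obtain ⟨p₁, hp₁, _, _, h⟩ := hPA
  exact ⟨mem_union_right _ hx.1, fun z hz => (mem_union.1 hz).elim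
    (fun hzA => (hx.2 p₁ hp₁).trans (h z hzA).1.le) (hx.2 z)⟩

lemma IsMaxOf.union_of_strictlyEncloses {x : Fin m} (hx : IsMaxOf x P)
    (hPA : StrictlyEncloses P A) : IsMaxOf x (A ∪ P) := by
  obtain ⟨_, _, p₂, hp₂, h⟩ := hPA
  exact ⟨mem_union_right _ hx.1, fun z hz => (mem_union.1 hz).elim
    (fun hzA => (h z hzA).2.le.trans (hx.2 p₂ hp₂)) (hx.2 z)⟩

def ofDisjointCover (parts : Finset (Finset (Fin m)))
    (hdisj : (parts : Set (Finset (Fin m))).PairwiseDisjoint id)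
    (hcov : ∀ x, ∃ B ∈ parts, x ∈ B) (hbot : ∅ ∉ parts) : FP m :=
  Finpartition.ofExistsUnique parts (fun _ _ => subset_univ _)
    (fun x _ => by
      obtain ⟨B, hB, hx⟩ := hcov x
      exact ⟨B, ⟨hB, hx⟩, fun C ⟨hC, hxC⟩ =>
        hdisj.elim hC hB (not_disjoint_iff.2 ⟨x, hxC, hx⟩)⟩)
    hbot

def merge (ψ : FP m) (hA : A ∈ ψ.parts) (hP : P ∈ ψ.parts) : FP m :=
  ofDisjointCover (insert (A ∪ P) ((ψ.parts.erase A).erase P))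
    (by
      have hdisj := ψ.disjoint
      intro X hX Y hY hXY
      simp only [coe_insert, coe_erase, Set.mem_insert_iff, Set.mem_sdiff, mem_coe,
        Set.mem_singleton_iff] at hX hY
      rcases hX with rfl | ⟨⟨hX, hXA⟩, hXP⟩ <;> rcases hY with rfl | ⟨⟨hY, hYA⟩, hYP⟩
      · exact absurd rfl hXY
      · exact disjoint_union_left.2 ⟨hdisj hA hY (Ne.symm hYA), hdisj hP hY (Ne.symm hYP)⟩
      · exact disjoint_union_right.2 ⟨hdisj hX hA hXA, hdisj hX hP hXP⟩
      · exact hdisj hX hY hXY)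
    (by
      intro x
      by_cases hxAP : x ∈ A ∪ P
      · exact ⟨A ∪ P, mem_insert_self _ _, hxAP⟩
      refine ⟨ψ.part x, mem_insert_of_mem (mem_erase.2 ⟨?_, mem_erase.2 ⟨?_, part_mem_parts ψ x⟩⟩),
        self_mem_part ψ x⟩
      · rintro h; exact hxAP (mem_union_right _ (h ▸ self_mem_part ψ x))
      · rintro h; exact hxAP (mem_union_left _ (h ▸ self_mem_part ψ x)))
    (by
      rw [mem_insert]
      rintro (h | h)
      · obtain ⟨a, ha⟩ := ψ.nonempty_of_mem_parts hA
        simpa [← h] using mem_union_left P ha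
      · exact ψ.bot_notMem (mem_of_mem_erase (mem_of_mem_erase h)))

variable (hA : A ∈ ψ.parts) (hP : P ∈ ψ.parts)

lemma mem_merge_parts :
    C ∈ (merge ψ hA hP).parts ↔ C = A ∪ P ∨ (C ∈ ψ.parts ∧ C ≠ A ∧ C ≠ P) := by
  show C ∈ insert (A ∪ P) ((ψ.parts.erase A).erase P) ↔ _
  rw [mem_insert, mem_erase, mem_erase]
  tauto

lemma card_merge_lt (hAP : A ≠ P) : (merge ψ hA hP).parts.card < ψ.parts.card := by
  show (insert (A ∪ P) ((ψ.parts.erase A).erase P)).card < _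
  have h₁ := card_erase_add_one (mem_erase.2 ⟨hAP.symm, hP⟩)
  have h₂ := card_erase_add_one hA
  have := card_insert_le (A ∪ P) ((ψ.parts.erase A).erase P)
  omega

lemma refines_merge : Refines ψ (merge ψ hA hP) := by
  intro C hC
  by_cases hCA : C = A
  · exact ⟨A ∪ P, (mem_merge_parts hA hP).2 (Or.inl rfl), hCA ▸ subset_union_left⟩
  by_cases hCP : C = P
  · exact ⟨A ∪ P, (mem_merge_parts hA hP).2 (Or.inl rfl), hCP ▸ subset_union_right⟩
  exact ⟨C, (mem_merge_parts hA hP).2 (Or.inr ⟨hC, hCA, hCP⟩), subset_rfl⟩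

end Merge

section Closure

variable {m : ℕ} {θ ψ : FP m} {A B P : Finset (Fin m)}

lemma not_crossing_merge_left (hNC : IsNC ψ) (hA : A ∈ ψ.parts) (hP : IsParentOf ψ A P)
    (hB : B ∈ ψ.parts) (hBA : B ≠ A) (hBP : B ≠ P) {x b₁ y b₂ : Fin m} (hx : x ∈ A ∪ P)
    (hb₁ : b₁ ∈ B) (hy : y ∈ A ∪ P) (hb₂ : b₂ ∈ B) (h₁ : x < b₁) (h₂ : b₁ < y) (h₃ : y < b₂) :
    False := by
  obtain ⟨p₁, hp₁, p₂, hp₂, hPA⟩ := hP.encloses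
  rcases mem_union.1 hx with hxA | hxP <;> rcases mem_union.1 hy with hyA | hyP
  · exact hBA (hNC.eq_of_crossing hA hB hxA hb₁ hyA hb₂ h₁ h₂ h₃).symm
  · exact hBP (hNC.eq_of_crossing hP.mem hB hp₁ hb₁ hyP hb₂ ((hPA x hxA).1.trans h₁) h₂ h₃).symm
  · obtain ⟨c₁, hc₁, _, _, hBP'⟩ :=
      hP.innermost B hB (hNC.strictlyEncloses hA hB hBA.symm hb₁ hb₂ hyA h₂ h₃)
    have hc₁x := lt_of_le_of_ne (hBP' x hxP).1 (ne_of_mem_of_mem hB hP.mem hBP hc₁ hxP)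
    exact hBP (hNC.eq_of_crossing hB hP.mem hc₁ hxP hb₁ hp₂ hc₁x h₁ (h₂.trans (hPA y hyA).2))
  · exact hBP (hNC.eq_of_crossing hP.mem hB hxP hb₁ hyP hb₂ h₁ h₂ h₃).symm

lemma not_crossing_merge_right (hNC : IsNC ψ) (hA : A ∈ ψ.parts) (hP : IsParentOf ψ A P)
    (hB : B ∈ ψ.parts) (hBA : B ≠ A) (hBP : B ≠ P) {b₁ x b₂ y : Fin m} (hb₁ : b₁ ∈ B)
    (hx : x ∈ A ∪ P) (hb₂ : b₂ ∈ B) (hy : y ∈ A ∪ P) (h₁ : b₁ < x) (h₂ : x < b₂) (h₃ : b₂ < y) :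
    False := by
  obtain ⟨p₁, hp₁, p₂, hp₂, hPA⟩ := hP.encloses
  rcases mem_union.1 hx with hxA | hxP <;> rcases mem_union.1 hy with hyA | hyP
  · exact hBA (hNC.eq_of_crossing hB hA hb₁ hxA hb₂ hyA h₁ h₂ h₃)
  · obtain ⟨_, _, c₂, hc₂, hBP'⟩ :=
      hP.innermost B hB (hNC.strictlyEncloses hA hB hBA.symm hb₁ hb₂ hxA h₁ h₂)
    have hyc₂ := lt_of_le_of_ne (hBP' y hyP).2 (ne_of_mem_of_mem hP.mem hB hBP.symm hyP hc₂)
    exact hBP (hNC.eq_of_crossing hP.mem hB hp₁ hb₂ hyP hc₂ ((hPA x hxA).1.trans h₂) h₃ hyc₂).symm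
  · exact hBP (hNC.eq_of_crossing hB hP.mem hb₁ hxP hb₂ hp₂ h₁ h₂ (h₃.trans (hPA y hyA).2))
  · exact hBP (hNC.eq_of_crossing hB hP.mem hb₁ hxP hb₂ hyP h₁ h₂ h₃)

lemma IsNC.merge (hNC : IsNC ψ) (hA : A ∈ ψ.parts) (hP : IsParentOf ψ A P) :
    IsNC (merge ψ hA hP.mem) := by
  intro i j k l h₁ h₂ h₃ ⟨C, hC, hi, hk⟩ ⟨D, hD, hj, hl⟩
  by_cases hCD : C = D
  · exact ⟨C, hC, hi, hCD ▸ hj⟩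
  exfalso
  rw [mem_merge_parts] at hC hD
  rcases hC with rfl | ⟨hC, hCA, hCP⟩ <;> rcases hD with rfl | ⟨hD, hDA, hDP⟩
  · exact hCD rfl
  · exact not_crossing_merge_left hNC hA hP hD hDA hDP hi hj hk hl h₁ h₂ h₃
  · exact not_crossing_merge_right hNC hA hP hC hCA hCP hi hj hk hl h₁ h₂ h₃
  · exact hCD (hNC.eq_of_crossing hC hD hi hj hk hl h₁ h₂ h₃)

lemma ParityPreserving.merge (hpar : ParityPreserving ψ) (hA : A ∈ ψ.parts) (hP : P ∈ ψ.parts)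
    (hAP : SameParity A P) : ParityPreserving (merge ψ hA hP) := by
  intro C hC
  rcases (mem_merge_parts hA hP).1 hC with rfl | ⟨hC, -, -⟩
  · rcases hAP with ⟨hA', hP'⟩ | ⟨hA', hP'⟩
    · exact Or.inl fun x hx => (mem_union.1 hx).elim (hA' x) (hP' x)
    · exact Or.inr fun x hx => (mem_union.1 hx).elim (hA' x) (hP' x)
  · exact hpar C hC

lemma Ll.merge (hll : Ll θ ψ) (hA : A ∈ ψ.parts) (hP : P ∈ ψ.parts)
    (hPA : StrictlyEncloses P A) : Ll θ (merge ψ hA hP) := by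
  refine ⟨hll.1.trans (refines_merge hA hP), fun C hC => ?_⟩
  rcases (mem_merge_parts hA hP).1 hC with rfl | ⟨hC, -, -⟩
  · obtain ⟨B, hB, x, y, hx, hy, hxB, hyB⟩ := hll.2 P hP
    exact ⟨B, hB, x, y, hx.union_of_strictlyEncloses hPA, hy.union_of_strictlyEncloses hPA,
      hxB, hyB⟩
  · exact hll.2 C hC

/-- An outer block of the merged partition is an old outer block or contains one. -/
lemma ExactlyTwoOuterBlocks.merge (h2 : ExactlyTwoOuterBlocks ψ) (hpar : ParityPreserving ψ)
    (hm : 0 < m) (heven : m % 2 = 0) (hA : A ∈ ψ.parts) (hP : P ∈ ψ.parts)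
    (hPA : StrictlyEncloses P A) (hpar' : ParityPreserving (merge ψ hA hP)) :
    ExactlyTwoOuterBlocks (merge ψ hA hP) := by
  refine exactlyTwoOuterBlocks_of hpar' hm heven fun C hC hout => ?_
  have hnot : ∀ X ∈ ψ.parts, ¬ StrictlyEncloses X C := fun X hX hXC => by
    obtain ⟨X', hX', hXX'⟩ := refines_merge hA hP X hX
    exact (isOuter_iff hC).1 hout X' hX' (hXC.mono hXX')
  have key : ∀ D ∈ ψ.parts, D ⊆ C → IsOuter ψ D → ⟨0, hm⟩ ∈ C ∨ ⟨m - 1, by omega⟩ ∈ C := by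
    intro D hD hDC hDout
    rcases h2.eq_or_eq hpar hm heven hD hDout with rfl | rfl
    · exact Or.inl (hDC (self_mem_part ψ _))
    · exact Or.inr (hDC (self_mem_part ψ _))
  rcases (mem_merge_parts hA hP).1 hC with rfl | ⟨hC', -, -⟩
  · exact key P hP subset_union_right
      ((isOuter_iff hP).2 fun X hX hXP => hnot X hX (hXP.union hPA))
  · exact key C hC' subset_rfl ((isOuter_iff hC').2 hnot)

structure MergePair (ψ : FP m) (A P : Finset (Fin m)) : Prop where
  mem : A ∈ ψ.parts
  parent : IsParentOf ψ A P
  sameParity : SameParity A P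

lemma MergePair.ne (h : MergePair ψ A P) : A ≠ P := by
  rintro rfl
  exact StrictlyEncloses.irrefl A h.parent.encloses

structure Admissible (θ ψ : FP m) : Prop where
  nc : IsNC ψ
  parity : ParityPreserving ψ
  twoOuter : ExactlyTwoOuterBlocks ψ
  ll : Ll θ ψ

lemma Admissible.merge (hψ : Admissible θ ψ) (hm : 0 < m) (heven : m % 2 = 0)
    (h : MergePair ψ A P) : Admissible θ (merge ψ h.mem h.parent.mem) :=
  have hpar' := hψ.parity.merge h.mem h.parent.mem h.sameParity
  ⟨hψ.nc.merge h.mem h.parent, hpar',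
    hψ.twoOuter.merge hψ.parity hm heven h.mem h.parent.mem h.parent.encloses hpar',
    hψ.ll.merge h.mem h.parent.mem h.parent.encloses⟩

/-- An admissible partition with the fewest blocks admits no further merge. -/
lemma exists_admissible_closed (hm : 0 < m) (heven : m % 2 = 0) (S : FP m → Prop)
    (hθ : Admissible θ θ) (hSθ : S θ)
    (hS : ∀ ψ A P, Admissible θ ψ → S ψ → (h : MergePair ψ A P) →
      S (merge ψ h.mem h.parent.mem)) :
    ∃ φ, Admissible θ φ ∧ S φ ∧ ∀ A P, ¬ MergePair φ A P := by
  obtain ⟨φ, ⟨hφ, hSφ⟩, hmin⟩ := (measure fun ψ : FP m => ψ.parts.card).wf.has_min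
    {ψ | Admissible θ ψ ∧ S ψ} ⟨θ, hθ, hSθ⟩
  exact ⟨φ, hφ, hSφ, fun A P h => hmin _ ⟨hφ.merge hm heven h, hS φ A P hφ hSφ h⟩
    (card_merge_lt h.mem h.parent.mem h.ne)⟩

end Closure

section GapFilled

variable {m : ℕ} {φ : FP m} {B O P Z : Finset (Fin m)} {z₁ z₂ : Fin m}

lemma IsMinOf.unique {x y : Fin m} (hx : IsMinOf x B) (hy : IsMinOf y B) : x = y :=
  le_antisymm (hx.2 y hy.1) (hy.2 x hx.1)

lemma IsMaxOf.unique {x y : Fin m} (hx : IsMaxOf x B) (hy : IsMaxOf y B) : x = y :=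
  le_antisymm (hy.2 x hx.1) (hx.2 y hy.1)

def GapFilled (φ : FP m) : Prop :=
  ∀ Z ∈ φ.parts, ∀ z₁ z₂, Adjacent Z z₁ z₂ → z₁.val + 1 < z₂.val →
    ∃ E ∈ φ.parts, ∃ e₁ e₂, IsMinOf e₁ E ∧ IsMaxOf e₂ E ∧ e₁.val = z₁.val + 1 ∧
      e₂.val + 1 = z₂.val

lemma GapFilled.mem_gap (hgap : GapFilled φ) (hZ : Z ∈ φ.parts) (hz : Adjacent Z z₁ z₂)
    {j y : Fin m} (h₁ : z₁ < j) (h₂ : j < z₂) (hy : y ∈ φ.part j) : z₁ < y ∧ y < z₂ := by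
  induction hk : z₂.val - z₁.val using Nat.strong_induction_on generalizing Z z₁ z₂ with
  | _ k ih =>
  have hz₁j : z₁.val < j.val := h₁
  have hjz₂ : j.val < z₂.val := h₂
  obtain ⟨E, hE, e₁, e₂, he₁, he₂, he₁v, he₂v⟩ := hgap Z hZ z₁ z₂ hz (by omega)
  by_cases hjE : j ∈ E
  · rw [φ.part_eq_of_mem hE hjE] at hy
    have h₁ : e₁.val ≤ y.val := he₁.2 y hy
    have h₂ : y.val ≤ e₂.val := he₂.2 y hy
    exact ⟨show z₁.val < y.val by omega, show y.val < z₂.val by omega⟩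
  have he₁j : e₁ < j := lt_of_le_of_ne (show e₁.val ≤ j.val by omega) fun h => hjE (h ▸ he₁.1)
  have hje₂ : j < e₂ := lt_of_le_of_ne (show j.val ≤ e₂.val by omega) fun h => hjE (h ▸ he₂.1)
  obtain ⟨w₁, w₂, hw, hew₁, hw₁j, hjw₂, hw₂e⟩ := exists_adjacent_around he₁.1 he₂.1 he₁j le_rfl
    hje₂ fun w hw ⟨h, h'⟩ => hjE (le_antisymm h' h ▸ hw)
  have hew₁' : e₁.val ≤ w₁.val := hew₁
  have hw₂e' : w₂.val ≤ e₂.val := hw₂e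
  obtain ⟨h₃, h₄⟩ := ih _ (by omega) hE hw hw₁j hjw₂ rfl
  have h₃' : w₁.val < y.val := h₃
  have h₄' : y.val < w₂.val := h₄
  exact ⟨show z₁.val < y.val by omega, show y.val < z₂.val by omega⟩

lemma GapFilled.isNC (hgap : GapFilled φ) : IsNC φ := by
  intro i j k l hij hjk hkl ⟨B, hB, hi, hk⟩ ⟨C, hC, hj, hl⟩
  by_cases hjB : j ∈ B
  · exact ⟨B, hB, hi, hjB⟩
  obtain ⟨w₁, w₂, hw, -, hw₁j, hjw₂, hw₂k⟩ := exists_adjacent_around hi hk hij le_rfl hjk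
    fun w hw ⟨h, h'⟩ => hjB (le_antisymm h' h ▸ hw)
  have := (hgap.mem_gap hB hw hw₁j hjw₂ (φ.part_eq_of_mem hC hj ▸ hl)).2
  exact absurd (this.trans_le hw₂k) hkl.not_gt

end GapFilled

section Closed

variable {m : ℕ} {φ : FP m} {B O P Z : Finset (Fin m)} {z₁ z₂ : Fin m}

lemma IsParentOf.eq_or_subset_gap (hNC : IsNC φ) (hZ : Z ∈ φ.parts) (hz : Adjacent Z z₁ z₂)
    (hB : B ∈ φ.parts) (hBgap : ∀ x ∈ B, z₁ < x ∧ x < z₂) (hP : IsParentOf φ B P) :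
    P = Z ∨ ∀ p ∈ P, z₁ < p ∧ p < z₂ := by
  by_cases hmeet : ∃ g ∈ P, z₁ < g ∧ g < z₂
  · obtain ⟨g, hg, h₁, h₂⟩ := hmeet
    have hPZ : P ≠ Z := fun h => hz.2.2.2 g (h ▸ hg) ⟨h₁, h₂⟩
    exact Or.inr (hNC.nested hP.mem hZ hPZ hz.1 hz.2.1 hg h₁ h₂)
  refine Or.inl (by_contra fun hPZ => ?_)
  push Not at hmeet
  obtain ⟨p₁, hp₁, p₂, hp₂, hPB⟩ := hP.encloses
  obtain ⟨b, hb⟩ := φ.nonempty_of_mem_parts hB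
  have hp₁z₁ : p₁ < z₁ := lt_of_le_of_ne
    (not_lt.1 fun h => (hmeet p₁ hp₁ h).not_gt ((hPB b hb).1.trans (hBgap b hb).2))
    (ne_of_mem_of_mem hP.mem hZ hPZ hp₁ hz.1)
  have hz₁p₂ : z₁ < p₂ := (hBgap b hb).1.trans (hPB b hb).2
  obtain ⟨c₁, hc₁, _, _, hZP⟩ := hP.innermost Z hZ ⟨z₁, hz.1, z₂, hz.2.1, hBgap⟩
  have hPZ' := hNC.nested hZ hP.mem (Ne.symm hPZ) hp₁ hp₂ hz.1 hp₁z₁ hz₁p₂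
  exact (hPZ' c₁ hc₁).1.not_ge (hZP p₁ hp₁).1

lemma IsNC.mem_gap (hNC : IsNC φ) (hZ : Z ∈ φ.parts) (hz : Adjacent Z z₁ z₂) {j y : Fin m}
    (h₁ : z₁ < j) (h₂ : j < z₂) (hy : y ∈ φ.part j) : z₁ < y ∧ y < z₂ :=
  hNC.nested (part_mem_parts φ j) hZ (fun h => hz.2.2.2 j (h ▸ self_mem_part φ j) ⟨h₁, h₂⟩)
    hz.1 hz.2.1 (self_mem_part φ j) h₁ h₂ y hy

lemma IsNC.exists_isParentOf_of_mem_gap (hNC : IsNC φ) (hZ : Z ∈ φ.parts)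
    (hz : Adjacent Z z₁ z₂) {j : Fin m} (h₁ : z₁ < j) (h₂ : j < z₂) :
    ∃ Q, IsParentOf φ (φ.part j) Q ∧ (Q = Z ∨ ∀ q ∈ Q, z₁ < q ∧ q < z₂) := by
  have hgap := fun y => hNC.mem_gap hZ hz h₁ h₂ (y := y)
  obtain ⟨Q, hQ⟩ := exists_isParentOf hNC (part_mem_parts φ j) ⟨Z, hZ, z₁, hz.1, z₂, hz.2.1, hgap⟩
  exact ⟨Q, hQ, hQ.eq_or_subset_gap hNC hZ hz (part_mem_parts φ j) hgap⟩

/-- If no block can be merged with its parent, blocks whose parent is `Z` have the parity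
opposite to `Z`. The block `E` of `z₁ + 1` has parent `Z`; a block starting right after `E`
would also have parent `Z` (an enclosing block inside the gap would cross `E`), hence the same
parity as its left neighbour in `E`. -/
lemma max_part_succ_of_closed (hNC : IsNC φ) (hpar : ParityPreserving φ)
    (hcl : ∀ A P, ¬ MergePair φ A P) (hZ : Z ∈ φ.parts) (hz : Adjacent Z z₁ z₂) {e : Fin m}
    (he : e.val = z₁.val + 1) (hez₂ : e < z₂) :
    ((φ.part e).max' ⟨e, self_mem_part φ e⟩).val + 1 = z₂.val := by
  have he₁ : z₁ < e := show z₁.val < e.val by omega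
  have hopp : ∀ j, IsParentOf φ (φ.part j) Z → j.val % 2 ≠ z₁.val % 2 := fun j hj =>
    mod_two_ne_of_not_sameParity hpar (part_mem_parts φ j) hZ
      (fun hs => hcl _ _ ⟨part_mem_parts φ j, hj, hs⟩) (self_mem_part φ j) hz.1
  set E := φ.part e
  have hE := part_mem_parts φ e
  have hEne : E.Nonempty := ⟨e, self_mem_part φ e⟩
  obtain ⟨Q, hQ, hQZ⟩ := hNC.exists_isParentOf_of_mem_gap hZ hz he₁ hez₂
  replace hQZ : Q = Z := hQZ.resolve_right fun hQgap => by
    obtain ⟨q₁, hq₁, _, _, hq⟩ := hQ.encloses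
    have h₁ : q₁.val < e.val := (hq e (self_mem_part φ e)).1
    have h₂ : z₁.val < q₁.val := (hQgap q₁ hq₁).1
    omega
  subst hQZ
  set x₀ := E.max' hEne
  have hx₀ := hNC.mem_gap hZ hz he₁ hez₂ (E.max'_mem hEne)
  have hx₀' : x₀.val < z₂.val := hx₀.2
  by_contra hne
  set x : Fin m := ⟨x₀.val + 1, by omega⟩
  have hx₀x : x₀ < x := Nat.lt_succ_self _
  have hx₂ : x < z₂ := show x₀.val + 1 < z₂.val by omega
  obtain ⟨R, hR, hRZ | hRgap⟩ := hNC.exists_isParentOf_of_mem_gap hZ hz (hx₀.1.trans hx₀x) hx₂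
  · have h₁ := hopp x (hRZ ▸ hR)
    have h₂ := hopp e hQ
    have h₃ := hpar.mod_two_eq hE (E.max'_mem hEne) (self_mem_part φ e)
    simp only [x] at h₁
    omega
  obtain ⟨r₁, hr₁, r₂, hr₂, hRx⟩ := hR.encloses
  have hRE : R ≠ E := by
    intro h
    rw [h] at hr₂
    exact (hRx x (self_mem_part φ x)).2.not_ge ((E.le_max' r₂ hr₂).trans hx₀x.le)
  have he_r₁ : e < r₁ := lt_of_le_of_ne (show e.val ≤ r₁.val by
      have : z₁.val < r₁.val := (hRgap r₁ hr₁).1; omega)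
    (ne_of_mem_of_mem hE hR.mem hRE.symm (self_mem_part φ e) hr₁)
  have hr₁x₀ : r₁ < x₀ := lt_of_le_of_ne (Nat.le_of_lt_succ (hRx x (self_mem_part φ x)).1)
    (ne_of_mem_of_mem hR.mem hE hRE hr₁ (E.max'_mem hEne))
  exact hRE (hNC.eq_of_crossing hE hR.mem (self_mem_part φ e) hr₁ (E.max'_mem hEne) hr₂ he_r₁
    hr₁x₀ (hx₀x.trans (hRx x (self_mem_part φ x)).2)).symm

lemma gapFilled_of_closed (hNC : IsNC φ) (hpar : ParityPreserving φ)
    (hcl : ∀ A P, ¬ MergePair φ A P) : GapFilled φ := by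
  intro Z hZ z₁ z₂ hz hlt
  set e : Fin m := ⟨z₁.val + 1, by omega⟩
  have he₁ : z₁ < e := Nat.lt_succ_self _
  have he₂ : e < z₂ := hlt
  refine ⟨φ.part e, part_mem_parts φ e, e, _, ⟨self_mem_part φ e, fun y hy => ?_⟩,
    isMaxOf_max' _, rfl, max_part_succ_of_closed hNC hpar hcl hZ hz rfl he₂⟩
  exact Nat.succ_le_of_lt (hNC.mem_gap hZ hz he₁ he₂ hy).1

lemma GapFilled.exists_adjacent_of_isParentOf (hNC : IsNC φ) (hgap : GapFilled φ)
    (hO : O ∈ φ.parts) (hP : IsParentOf φ O P) {o₁ o₂ : Fin m} (ho₁ : IsMinOf o₁ O)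
    (ho₂ : IsMaxOf o₂ O) :
    ∃ p₁ p₂, Adjacent P p₁ p₂ ∧ p₁.val + 1 = o₁.val ∧ o₂.val + 1 = p₂.val := by
  have hPO : P ≠ O := fun h => StrictlyEncloses.irrefl O (h ▸ hP.encloses)
  obtain ⟨p₁, p₂, hp, hp₁, hp₂⟩ :=
    hNC.exists_adjacent_around hP.mem hO hPO subset_rfl hP.encloses ho₁ ho₂
  have hp₁' : p₁.val < o₁.val := hp₁
  have hp₂' : o₂.val < p₂.val := hp₂
  have ho : o₁.val ≤ o₂.val := ho₁.2 o₂ ho₂.1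
  obtain ⟨E, hE, e₁, e₂, he₁, he₂, he₁v, he₂v⟩ := hgap P hP.mem p₁ p₂ hp (by omega)
  by_cases hOE : O = E
  · subst hOE
    rw [he₁.unique ho₁] at he₁v
    rw [he₂.unique ho₂] at he₂v
    exact ⟨p₁, p₂, hp, he₁v.symm, he₂v⟩
  have hEO : StrictlyEncloses E O := by
    refine ⟨e₁, he₁.1, e₂, he₂.1, fun o ho => ⟨?_, ?_⟩⟩
    · have : o₁.val ≤ o.val := ho₁.2 o ho
      exact lt_of_le_of_ne (show e₁.val ≤ o.val by omega)
        (ne_of_mem_of_mem hE hO (Ne.symm hOE) he₁.1 ho)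
    · have : o.val ≤ o₂.val := ho₂.2 o ho
      exact lt_of_le_of_ne (show o.val ≤ e₂.val by omega)
        (ne_of_mem_of_mem hO hE hOE ho he₂.1)
  obtain ⟨f₁, hf₁, _, _, hEP⟩ := hP.innermost E hE hEO
  have h₁ : f₁.val ≤ p₁.val := (hEP p₁ hp.1).1
  have h₂ : e₁.val ≤ f₁.val := he₁.2 f₁ hf₁
  omega

end Closed

section Image

variable {n k : ℕ} {e : Fin n → Fin k} {W : Finset (Fin n)} {a b : Fin n}

lemma isMinOf_image_iff (he : StrictMono e) : IsMinOf (e a) (W.image e) ↔ IsMinOf a W := by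
  simp only [IsMinOf, he.injective.mem_finset_image, forall_mem_image, he.le_iff_le]

lemma isMaxOf_image_iff (he : StrictMono e) : IsMaxOf (e a) (W.image e) ↔ IsMaxOf a W := by
  simp only [IsMaxOf, he.injective.mem_finset_image, forall_mem_image, he.le_iff_le]

lemma adjacent_image_iff (he : StrictMono e) :
    Adjacent (W.image e) (e a) (e b) ↔ Adjacent W a b := by
  simp only [Adjacent, he.injective.mem_finset_image, forall_mem_image, he.lt_iff_lt]

end Image

section Halving

variable {n : ℕ}

def half (x : Fin (2 * n)) : Fin n := ⟨x.val / 2, by omega⟩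

@[simp] lemma oddEmb_val (a : Fin n) : (oddEmb a).val = 2 * a.val := rfl
@[simp] lemma evenEmb_val (a : Fin n) : (evenEmb a).val = 2 * a.val + 1 := rfl
@[simp] lemma half_val (x : Fin (2 * n)) : (half x).val = x.val / 2 := rfl

lemma strictMono_oddEmb : StrictMono (oddEmb (n := n)) := fun a b h => by
  show 2 * a.val < 2 * b.val; have : a.val < b.val := h; omega

lemma strictMono_evenEmb : StrictMono (evenEmb (n := n)) := fun a b h => by
  show 2 * a.val + 1 < 2 * b.val + 1; have : a.val < b.val := h; omega

lemma half_oddEmb (a : Fin n) : half (oddEmb a) = a := Fin.ext (by simp)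

lemma half_evenEmb (a : Fin n) : half (evenEmb a) = a :=
  Fin.ext (by simp only [half_val, evenEmb_val]; omega)

lemma oddEmb_half {x : Fin (2 * n)} (hx : x.val % 2 = 0) : oddEmb (half x) = x :=
  Fin.ext (by simp only [oddEmb_val, half_val]; omega)

lemma evenEmb_half {x : Fin (2 * n)} (hx : x.val % 2 = 1) : evenEmb (half x) = x :=
  Fin.ext (by simp only [evenEmb_val, half_val]; omega)

noncomputable def halfPart (φ : FP (2 * n)) (S : Finset (Fin (2 * n)) → Prop)
    (e : Fin n → Fin (2 * n))
    (he : ∀ B, S B → ∀ x ∈ B, e (half x) = x) (hhalf : ∀ a, half (e a) = a)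
    (hS : ∀ a, S (φ.part (e a))) : FP n :=
  ofDisjointCover ((φ.parts.filter S).image (image half))
    (by
      simp only [coe_image, coe_filter]
      rintro _ ⟨B, ⟨hB, hSB⟩, rfl⟩ _ ⟨C, ⟨hC, hSC⟩, rfl⟩ hBC
      refine disjoint_left.2 fun a haB haC => hBC ?_
      obtain ⟨x, hx, rfl⟩ := mem_image.1 haB
      obtain ⟨y, hy, hxy⟩ := mem_image.1 haC
      have hxy' : x = y := by rw [← he B hSB x hx, ← hxy, he C hSC y hy]
      exact congrArg _ (φ.eq_of_mem_parts hB hC hx (hxy' ▸ hy)))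
    (fun a => ⟨(φ.part (e a)).image half,
      mem_image_of_mem _ (mem_filter.2 ⟨part_mem_parts φ _, hS a⟩),
      mem_image.2 ⟨e a, self_mem_part φ (e a), hhalf a⟩⟩)
    (by
      intro h
      obtain ⟨B, hB, hBe⟩ := mem_image.1 h
      obtain ⟨x, hx⟩ := φ.nonempty_of_mem_parts (mem_filter.1 hB).1
      exact notMem_empty _ (hBe ▸ mem_image_of_mem half hx))

variable {φ : FP (2 * n)} {S : Finset (Fin (2 * n)) → Prop} {e : Fin n → Fin (2 * n)}

lemma image_image_half (he : ∀ B, S B → ∀ x ∈ B, e (half x) = x) {B : Finset (Fin (2 * n))}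
    (hB : S B) : (B.image half).image e = B := by
  rw [image_image]
  exact (image_congr fun x hx => he B hB x hx).trans image_id

end Halving

section OddEvenParts

variable {n : ℕ} {φ : FP (2 * n)} {S : Finset (Fin (2 * n)) → Prop} {e : Fin n → Fin (2 * n)}

lemma mem_halfPart_parts {he : ∀ B, S B → ∀ x ∈ B, e (half x) = x} {hhalf : ∀ a, half (e a) = a}
    {hS : ∀ a, S (φ.part (e a))} {W : Finset (Fin n)} :
    W ∈ (halfPart φ S e he hhalf hS).parts ↔ ∃ B ∈ φ.parts, S B ∧ B.image half = W := by
  simp only [halfPart, ofDisjointCover, Finpartition.ofExistsUnique_parts, mem_image, mem_filter,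
    and_assoc]

lemma image_part_halfPart (he : ∀ B, S B → ∀ x ∈ B, e (half x) = x)
    (hhalf : ∀ a, half (e a) = a) (hS : ∀ a, S (φ.part (e a))) (a : Fin n) :
    ((halfPart φ S e he hhalf hS).part a).image e = φ.part (e a) := by
  rw [Finpartition.part_eq_of_mem _ (mem_halfPart_parts.2 ⟨_, part_mem_parts φ (e a), hS a, rfl⟩)
    (mem_image.2 ⟨e a, self_mem_part φ (e a), hhalf a⟩), image_image_half he (hS a)]

lemma oddBlock_part_oddEmb (hpar : ParityPreserving φ) (a : Fin n) :
    OddBlock (φ.part (oddEmb a)) :=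
  (hpar _ (part_mem_parts φ _)).resolve_right fun h => by
    simpa using h _ (self_mem_part φ (oddEmb a))

lemma evenBlock_part_evenEmb (hpar : ParityPreserving φ) (a : Fin n) :
    EvenBlock (φ.part (evenEmb a)) :=
  (hpar _ (part_mem_parts φ _)).resolve_left fun h => by
    simpa using h _ (self_mem_part φ (evenEmb a))

noncomputable def oddPart (φ : FP (2 * n)) (hpar : ParityPreserving φ) : FP n :=
  halfPart φ OddBlock oddEmb (fun _ hB x hx => oddEmb_half (hB x hx)) half_oddEmb
    (oddBlock_part_oddEmb hpar)

noncomputable def evenPart (φ : FP (2 * n)) (hpar : ParityPreserving φ) : FP n :=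
  halfPart φ EvenBlock evenEmb (fun _ hB x hx => evenEmb_half (hB x hx)) half_evenEmb
    (evenBlock_part_evenEmb hpar)

variable (hpar : ParityPreserving φ)

lemma image_part_oddPart (a : Fin n) :
    ((oddPart φ hpar).part a).image oddEmb = φ.part (oddEmb a) :=
  image_part_halfPart _ _ _ a

lemma image_part_evenPart (a : Fin n) :
    ((evenPart φ hpar).part a).image evenEmb = φ.part (evenEmb a) :=
  image_part_halfPart _ _ _ a

lemma isNC_oddPart (hNC : IsNC φ) : IsNC (oddPart φ hpar) := by
  have key : ∀ a b, SameBlock (oddPart φ hpar) a b ↔ SameBlock φ (oddEmb a) (oddEmb b) := by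
    intro a b
    rw [sameBlock_iff_mem_part, sameBlock_iff_mem_part, ← image_part_oddPart hpar,
      strictMono_oddEmb.injective.mem_finset_image]
  intro i j k l h₁ h₂ h₃ hik hjl
  rw [key] at hik hjl ⊢
  exact hNC _ _ _ _ (strictMono_oddEmb h₁) (strictMono_oddEmb h₂) (strictMono_oddEmb h₃) hik hjl

lemma isOddEvenJoin_oddPart_evenPart : IsOddEvenJoin (oddPart φ hpar) (evenPart φ hpar) φ := by
  ext B
  simp only [oddPart, evenPart, mem_union, mem_image, mem_halfPart_parts]
  constructor
  · intro hB
    rcases hpar B hB with h | h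
    · exact Or.inl ⟨_, ⟨B, hB, h, rfl⟩,
        image_image_half (fun _ hB x hx => oddEmb_half (hB x hx)) h⟩
    · exact Or.inr ⟨_, ⟨B, hB, h, rfl⟩,
        image_image_half (fun _ hB x hx => evenEmb_half (hB x hx)) h⟩
  · rintro (⟨_, ⟨C, hC, h, rfl⟩, rfl⟩ | ⟨_, ⟨C, hC, h, rfl⟩, rfl⟩)
    · rwa [image_image_half (fun _ hB x hx => oddEmb_half (hB x hx)) h]
    · rwa [image_image_half (fun _ hB x hx => evenEmb_half (hB x hx)) h]

end OddEvenParts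

section Join

variable {n : ℕ} {π κ : FP n} {φ : FP (2 * n)}

lemma IsOddEvenJoin.mem_parts (hjoin : IsOddEvenJoin π κ φ) {B : Finset (Fin (2 * n))} :
    B ∈ φ.parts ↔ (∃ V ∈ π.parts, V.image oddEmb = B) ∨ ∃ W ∈ κ.parts, W.image evenEmb = B := by
  rw [hjoin, mem_union, mem_image, mem_image]

lemma IsOddEvenJoin.parityPreserving (hjoin : IsOddEvenJoin π κ φ) : ParityPreserving φ := by
  intro B hB
  rcases hjoin.mem_parts.1 hB with ⟨V, -, rfl⟩ | ⟨W, -, rfl⟩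
  · exact Or.inl (forall_mem_image.2 fun a _ => by simp)
  · exact Or.inr (forall_mem_image.2 fun a _ => by simp)

lemma eq_of_parts_subset {k : ℕ} {ψ ψ' : FP k} (h : ψ.parts ⊆ ψ'.parts) : ψ = ψ' := by
  refine Finpartition.ext (Subset.antisymm h fun C hC => ?_)
  obtain ⟨x, hx⟩ := ψ'.nonempty_of_mem_parts hC
  rw [← ψ'.part_eq_of_mem hC hx, ψ'.part_eq_of_mem (h (part_mem_parts ψ x)) (self_mem_part ψ x)]
  exact part_mem_parts ψ x

lemma IsOddEvenJoin.left_unique {π' κ' : FP n} (hjoin : IsOddEvenJoin π κ φ)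
    (hjoin' : IsOddEvenJoin π' κ' φ) : π = π' := by
  refine eq_of_parts_subset fun V hV => ?_
  rcases hjoin'.mem_parts.1 (hjoin.mem_parts.2 (Or.inl ⟨V, hV, rfl⟩)) with ⟨V', hV', h⟩ | ⟨W, -, h⟩
  · rwa [← image_injective strictMono_oddEmb.injective h]
  · obtain ⟨a, ha⟩ := π.nonempty_of_mem_parts hV
    obtain ⟨b, -, hb⟩ := mem_image.1 (h ▸ mem_image_of_mem oddEmb ha)
    have := congrArg Fin.val hb
    simp only [evenEmb_val, oddEmb_val] at this
    omega

end Join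

section AssocPerm

variable {k : ℕ} {ρ : FP k} {σ : Equiv.Perm (Fin k)} {V : Finset (Fin k)} {u v : Fin k}

def IsCyclicSucc (E : Finset (Fin k)) (x y : Fin k) : Prop :=
  Adjacent E x y ∨ (IsMaxOf x E ∧ IsMinOf y E)

lemma isCyclicSucc_image_iff {n : ℕ} {e : Fin n → Fin k} (he : StrictMono e) {W : Finset (Fin n)}
    {a b : Fin n} : IsCyclicSucc (W.image e) (e a) (e b) ↔ IsCyclicSucc W a b := by
  rw [IsCyclicSucc, IsCyclicSucc, adjacent_image_iff he, isMaxOf_image_iff he, isMinOf_image_iff he]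

lemma isAssocPerm_of_forall (h : ∀ b, IsCyclicSucc (ρ.part b) b (σ b)) : IsAssocPerm ρ σ := by
  intro B hB b hb
  rw [← ρ.part_eq_of_mem hB hb]
  rcases h b with ⟨-, hc, hbc, hadj⟩ | ⟨h₁, h₂⟩
  · exact ⟨hc, Or.inl ⟨hbc, fun x hx hbx => not_lt.1 fun hxc => hadj x hx ⟨hbx, hxc⟩⟩⟩
  · exact ⟨h₂.1, Or.inr ⟨h₁, h₂⟩⟩

lemma IsAssocPerm.apply_eq (h : IsAssocPerm ρ σ) (hV : V ∈ ρ.parts) (huv : IsCyclicSucc V u v) :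
    σ u = v := by
  rcases huv with huv | ⟨hu, hv⟩
  · rcases (h V hV u huv.1).2 with ⟨h₁, h₂⟩ | ⟨h₁, -⟩
    · exact (h₂ v huv.2.1 huv.2.2.1).eq_or_lt.resolve_right
        fun hlt => huv.2.2.2 _ (h V hV u huv.1).1 ⟨h₁, hlt⟩
    · exact absurd (h₁.2 v huv.2.1) huv.2.2.1.not_ge
  · rcases (h V hV u hu.1).2 with ⟨h₁, -⟩ | ⟨-, h₂⟩
    · exact absurd (hu.2 _ (h V hV u hu.1).1) h₁.not_ge
    · exact h₂.unique hv

noncomputable def cyclicSucc (ρ : FP k) (b : Fin k) : Fin k :=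
  if h : ((ρ.part b).filter (b < ·)).Nonempty then ((ρ.part b).filter (b < ·)).min' h
  else (ρ.part b).min' ⟨b, self_mem_part ρ b⟩

lemma cyclicSucc_spec (ρ : FP k) (b : Fin k) : IsCyclicSucc (ρ.part b) b (cyclicSucc ρ b) := by
  unfold cyclicSucc
  split_ifs with h
  · obtain ⟨hc, hbc⟩ := mem_filter.1 (min'_mem _ h)
    exact Or.inl ⟨self_mem_part ρ b, hc, hbc, fun w hw ⟨h₁, h₂⟩ =>
      h₂.not_ge (min'_le _ w (mem_filter.2 ⟨hw, h₁⟩))⟩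
  · refine Or.inr ⟨⟨self_mem_part ρ b, fun y hy =>
      not_lt.1 fun hby => h ⟨y, mem_filter.2 ⟨hy, hby⟩⟩⟩,
      min'_mem _ _, fun y hy => min'_le _ y hy⟩

lemma cyclicSucc_injective (ρ : FP k) : Function.Injective (cyclicSucc ρ) := by
  intro a a' h
  have hmem : ∀ b, cyclicSucc ρ b ∈ ρ.part b := fun b =>
    (cyclicSucc_spec ρ b).elim (fun h => h.2.1) (fun h => h.2.1)
  have hB : ρ.part a' = ρ.part a := by
    rw [← ρ.part_eq_of_mem (part_mem_parts ρ a') (hmem a'), ← h,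
      ρ.part_eq_of_mem (part_mem_parts ρ a) (hmem a)]
  have ha : a ∈ ρ.part a := self_mem_part ρ a
  have ha' : a' ∈ ρ.part a := hB ▸ self_mem_part ρ a'
  have h₁ := cyclicSucc_spec ρ a
  have h₂ := cyclicSucc_spec ρ a'
  rw [hB, ← h] at h₂
  rcases h₁ with h₁ | h₁ <;> rcases h₂ with h₂ | h₂
  · rcases lt_trichotomy a a' with hlt | heq | hlt
    · exact absurd ⟨hlt, h₂.2.2.1⟩ (h₁.2.2.2 a' ha')
    · exact heq
    · exact absurd ⟨hlt, h₁.2.2.1⟩ (h₂.2.2.2 a ha)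
  · exact absurd (h₂.2.2 a ha) h₁.2.2.1.not_ge
  · exact absurd (h₁.2.2 a' ha') h₂.2.2.1.not_ge
  · exact h₁.1.unique h₂.1

lemma exists_isAssocPerm (ρ : FP k) : ∃ σ, IsAssocPerm ρ σ :=
  ⟨Equiv.ofBijective _ (Finite.injective_iff_bijective.1 (cyclicSucc_injective ρ)),
    isAssocPerm_of_forall (cyclicSucc_spec ρ)⟩

end AssocPerm

section Kreweras

variable {n : ℕ}

lemma finRotate_val_of_lt {b : Fin n} (h : b.val + 1 < n) : (finRotate n b).val = b.val + 1 := by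
  obtain ⟨k, rfl⟩ : ∃ k, n = k + 1 := ⟨n - 1, by omega⟩
  rw [coe_finRotate, if_neg]
  rintro rfl
  simp at h

lemma finRotate_val_of_eq {b : Fin n} (h : b.val + 1 = n) : (finRotate n b).val = 0 := by
  obtain ⟨k, rfl⟩ : ∃ k, n = k + 1 := ⟨n - 1, by omega⟩
  rw [coe_finRotate, if_pos (Fin.ext (by simp only [Fin.val_last]; omega))]

variable {π κ : FP n} {σ τ : Equiv.Perm (Fin n)} {V W : Finset (Fin n)} {u v : Fin n}

lemma kreweras_adjacent_left (hσ : IsAssocPerm π σ) (hτ : IsAssocPerm κ τ)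
    (hrel : τ = σ⁻¹ * finRotate n) (hV : V ∈ π.parts) (huv : Adjacent V u v) :
    ∃ W ∈ κ.parts, ∃ d, IsMinOf u W ∧ IsMaxOf d W ∧ d.val + 1 = v.val := by
  have hσu : σ u = v := hσ.apply_eq hV (Or.inl huv)
  have huv' : u.val < v.val := huv.2.2.1
  set d : Fin n := ⟨v.val - 1, by omega⟩
  have hd : d.val + 1 = v.val := show v.val - 1 + 1 = v.val by omega
  have hrot : finRotate n d = v := Fin.ext (by rw [finRotate_val_of_lt (by omega), hd])
  have hτd : τ d = u := by
    rw [hrel, Equiv.Perm.mul_apply, hrot, Equiv.Perm.inv_eq_iff_eq, hσu]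
  obtain ⟨-, hcase⟩ := hτ _ (part_mem_parts κ d) d (self_mem_part κ d)
  rw [hτd] at hcase
  rcases hcase with ⟨h, -⟩ | ⟨hmax, hmin⟩
  · have : d.val < u.val := h
    omega
  · exact ⟨_, part_mem_parts κ d, d, hmin, hmax, hd⟩

lemma kreweras_adjacent_right (hσ : IsAssocPerm π σ) (hτ : IsAssocPerm κ τ)
    (hrel : τ = σ⁻¹ * finRotate n) (hW : W ∈ κ.parts) (huv : Adjacent W u v) :
    ∃ V ∈ π.parts, ∃ s, IsMinOf s V ∧ IsMaxOf v V ∧ s.val = u.val + 1 := by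
  have hτu : τ u = v := hτ.apply_eq hW (Or.inl huv)
  have huv' : u.val < v.val := huv.2.2.1
  set s : Fin n := ⟨u.val + 1, by omega⟩
  have hrot : finRotate n u = s := Fin.ext (finRotate_val_of_lt (by omega))
  have hσv : σ v = s := by
    rw [hrel, Equiv.Perm.mul_apply, hrot, Equiv.Perm.inv_eq_iff_eq] at hτu
    exact hτu.symm
  obtain ⟨-, hcase⟩ := hσ _ (part_mem_parts π v) v (self_mem_part π v)
  rw [hσv] at hcase
  rcases hcase with ⟨h, -⟩ | ⟨hmax, hmin⟩
  · have : v.val < u.val + 1 := h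
    omega
  · exact ⟨_, part_mem_parts π v, s, hmin, hmax, rfl⟩

lemma IsKrewerasPair.gapFilled {φ : FP (2 * n)} (hK : IsKrewerasPair π κ)
    (hjoin : IsOddEvenJoin π κ φ) : GapFilled φ := by
  obtain ⟨σ, τ, hσ, hτ, hrel⟩ := hK
  intro Z hZ z₁ z₂ hz _
  rcases hjoin.mem_parts.1 hZ with ⟨V, hV, rfl⟩ | ⟨W, hW, rfl⟩
  · obtain ⟨u, -, rfl⟩ := mem_image.1 hz.1
    obtain ⟨v, -, rfl⟩ := mem_image.1 hz.2.1
    obtain ⟨W, hW, d, hu, hd, hdv⟩ :=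
      kreweras_adjacent_left hσ hτ hrel hV ((adjacent_image_iff strictMono_oddEmb).1 hz)
    refine ⟨W.image evenEmb, hjoin.mem_parts.2 (Or.inr ⟨W, hW, rfl⟩), evenEmb u, evenEmb d,
      (isMinOf_image_iff strictMono_evenEmb).2 hu, (isMaxOf_image_iff strictMono_evenEmb).2 hd,
      by simp, by simp only [evenEmb_val, oddEmb_val]; omega⟩
  · obtain ⟨u, -, rfl⟩ := mem_image.1 hz.1
    obtain ⟨v, -, rfl⟩ := mem_image.1 hz.2.1
    obtain ⟨V, hV, s, hs, hv, hsu⟩ :=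
      kreweras_adjacent_right hσ hτ hrel hW ((adjacent_image_iff strictMono_evenEmb).1 hz)
    refine ⟨V.image oddEmb, hjoin.mem_parts.2 (Or.inl ⟨V, hV, rfl⟩), oddEmb s, oddEmb v,
      (isMinOf_image_iff strictMono_oddEmb).2 hs, (isMaxOf_image_iff strictMono_oddEmb).2 hv,
      by simp only [oddEmb_val, evenEmb_val]; omega, by simp⟩

end Kreweras

section KrewerasOfClosed

variable {n : ℕ} {φ : FP (2 * n)} {σ : Equiv.Perm (Fin n)} {a b c : Fin n}

lemma IsAssocPerm.apply_eq_of_oddEmb (hpar : ParityPreserving φ)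
    (hσ : IsAssocPerm (oddPart φ hpar) σ)
    (h : IsCyclicSucc (φ.part (oddEmb c)) (oddEmb a) (oddEmb c)) : σ a = c :=
  hσ.apply_eq (part_mem_parts _ c)
    ((isCyclicSucc_image_iff strictMono_oddEmb).1 (image_part_oddPart hpar c ▸ h))

lemma oddEmb_half_max' (hpar : ParityPreserving φ) (a : Fin n) :
    oddEmb (half ((φ.part (oddEmb a)).max' ⟨_, self_mem_part φ _⟩)) =
      (φ.part (oddEmb a)).max' ⟨_, self_mem_part φ _⟩ :=
  oddEmb_half (oddBlock_part_oddEmb hpar a _ (max'_mem _ _))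

/-- The block of the last element starts right after the block of the first one ends. -/
lemma exists_cyclicSucc_of_last (hpar : ParityPreserving φ) (hNC : IsNC φ)
    (h2 : ExactlyTwoOuterBlocks φ) (hn : 0 < n) (hσ : IsAssocPerm (oddPart φ hpar) σ)
    (hb : b.val + 1 = n) :
    ∃ a, σ a = finRotate n b ∧ IsCyclicSucc (φ.part (evenEmb b)) (evenEmb b) (evenEmb a) := by
  have hm : 0 < 2 * n := by omega
  set c := finRotate n b
  have hc : oddEmb c = ⟨0, hm⟩ := Fin.ext (by
    show 2 * (finRotate n b).val = 0
    rw [finRotate_val_of_eq hb])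
  have hb' : evenEmb b = ⟨2 * n - 1, by omega⟩ := Fin.ext (by simp only [evenEmb_val]; omega)
  set x₀ := (φ.part (oddEmb c)).max' ⟨_, self_mem_part φ _⟩
  have hx₀ : IsMaxOf x₀ (φ.part (oddEmb c)) := isMaxOf_max' _
  set a := half x₀
  have ha : oddEmb a = x₀ := oddEmb_half_max' hpar c
  refine ⟨a, hσ.apply_eq_of_oddEmb hpar (Or.inr ⟨ha ▸ hx₀, self_mem_part φ _,
    fun y _ => hc ▸ Nat.zero_le _⟩), Or.inr ⟨?_, ?_⟩⟩
  · refine ⟨self_mem_part φ _, fun y _ => ?_⟩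
    rw [hb']
    exact Nat.le_sub_one_of_lt y.isLt
  · rw [hb']
    set N := φ.part ⟨2 * n - 1, by omega⟩
    have hNne : N.Nonempty := ⟨_, self_mem_part φ _⟩
    have hy₀ : IsMinOf (N.min' hNne) N := isMinOf_min' hNne
    have key := min_part_last_eq_succ_max_part_zero hNC hpar h2 hm (by omega) (hc ▸ hx₀) hy₀
    have : evenEmb a = N.min' hNne := Fin.ext (by rw [key, ← ha]; simp)
    exact this ▸ hy₀

lemma exists_cyclicSucc_of_not_min (hpar : ParityPreserving φ) (hgap : GapFilled φ)
    (hσ : IsAssocPerm (oddPart φ hpar) σ) (hb : b.val + 1 < n) {p : Fin (2 * n)}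
    (hp : p ∈ φ.part (oddEmb (finRotate n b))) (hpc : p < oddEmb (finRotate n b)) :
    ∃ a, σ a = finRotate n b ∧ IsCyclicSucc (φ.part (evenEmb b)) (evenEmb b) (evenEmb a) := by
  set c := finRotate n b
  have hcv : c.val = b.val + 1 := finRotate_val_of_lt hb
  set O := φ.part (oddEmb c)
  have hO := part_mem_parts φ (oddEmb c)
  have hOodd := oddBlock_part_oddEmb hpar c
  have hpb : p < evenEmb b := by
    have h₁ : p.val < 2 * c.val := hpc
    have h₂ := hOodd p hp
    show p.val < 2 * b.val + 1
    omega
  have hbc : evenEmb b < oddEmb c := show 2 * b.val + 1 < 2 * c.val by omega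
  obtain ⟨w₁, w₂, hw, -, hw₁b, hbw₂, hw₂c⟩ := exists_adjacent_around hp (self_mem_part φ _) hpb
    le_rfl hbc fun w hw ⟨h₁, h₂⟩ => by
      have := hOodd w hw; rw [le_antisymm h₂ h₁] at this; simp at this
  have hw₂ : w₂ = oddEmb c := by
    refine le_antisymm hw₂c (not_lt.1 fun h => ?_)
    have h₁ : 2 * b.val + 1 < w₂.val := hbw₂
    have h₂ : w₂.val < 2 * c.val := h
    omega
  subst hw₂
  have hw₁ := oddEmb_half (hOodd w₁ hw.1)
  have hw₁' : w₁.val < 2 * b.val + 1 := hw₁b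
  obtain ⟨E, hE, e₁, e₂, he₁, he₂, he₁v, he₂v⟩ :=
    hgap O hO w₁ _ hw (by simp only [oddEmb_val]; omega)
  have he₂b : e₂ = evenEmb b := Fin.ext (by simp only [oddEmb_val, evenEmb_val] at he₂v ⊢; omega)
  have he₁a : e₁ = evenEmb (half w₁) := Fin.ext (by rw [he₁v, ← hw₁]; simp)
  rw [← φ.part_eq_of_mem hE (he₂b ▸ he₂.1)] at he₁ he₂
  exact ⟨half w₁, hσ.apply_eq_of_oddEmb hpar (Or.inl (hw₁.symm ▸ hw)),
    Or.inr ⟨he₂b ▸ he₂, he₁a ▸ he₁⟩⟩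

/-- If `oddEmb (b + 1)` starts its block, that block exactly fills the gap of its parent that
follows `evenEmb b`. -/
lemma exists_cyclicSucc_of_min (hpar : ParityPreserving φ) (hNC : IsNC φ)
    (h2 : ExactlyTwoOuterBlocks φ) (hgap : GapFilled φ) (hσ : IsAssocPerm (oddPart φ hpar) σ)
    (hb : b.val + 1 < n)
    (hmin : IsMinOf (oddEmb (finRotate n b)) (φ.part (oddEmb (finRotate n b)))) :
    ∃ a, σ a = finRotate n b ∧ IsCyclicSucc (φ.part (evenEmb b)) (evenEmb b) (evenEmb a) := by
  have hm : 0 < 2 * n := by omega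
  set c := finRotate n b
  have hcv : c.val = b.val + 1 := finRotate_val_of_lt hb
  set O := φ.part (oddEmb c)
  have hO := part_mem_parts φ (oddEmb c)
  have hOodd := oddBlock_part_oddEmb hpar c
  set x₀ := O.max' ⟨_, self_mem_part φ _⟩
  have hx₀ : IsMaxOf x₀ O := isMaxOf_max' _
  set a := half x₀
  have ha : oddEmb a = x₀ := oddEmb_half_max' hpar c
  have hOout : ¬ IsOuter φ O := by
    intro hout
    rcases h2.eq_or_eq hpar hm (by omega) hO hout with h | h
    · have h0 : (⟨0, hm⟩ : Fin (2 * n)) ∈ φ.part (oddEmb c) := h ▸ self_mem_part φ _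
      have : (oddEmb c).val ≤ 0 := hmin.2 _ h0
      simp only [oddEmb_val] at this; omega
    · have h0 : (⟨2 * n - 1, by omega⟩ : Fin (2 * n)) ∈ φ.part (oddEmb c) :=
        h ▸ self_mem_part φ _
      have := hOodd _ h0
      simp only at this; omega
  obtain ⟨P, hP⟩ := exists_isParentOf_of_not_isOuter hNC hO hOout
  obtain ⟨p₁, p₂, hp, hp₁, hp₂⟩ := hgap.exists_adjacent_of_isParentOf hNC hO hP hmin hx₀
  have hp₁b : p₁ = evenEmb b := Fin.ext (by simp only [oddEmb_val, evenEmb_val] at hp₁ ⊢; omega)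
  have hp₂a : p₂ = evenEmb a := Fin.ext (by rw [← hp₂, ← ha]; simp)
  rw [hp₁b, hp₂a] at hp
  rw [← φ.part_eq_of_mem hP.mem hp.1] at hp
  exact ⟨a, hσ.apply_eq_of_oddEmb hpar (Or.inr ⟨ha ▸ hx₀, hmin⟩), Or.inl hp⟩

lemma isKrewerasPair_of_closed (hpar : ParityPreserving φ) (hNC : IsNC φ)
    (h2 : ExactlyTwoOuterBlocks φ) (hgap : GapFilled φ) (hn : 0 < n) :
    IsKrewerasPair (oddPart φ hpar) (evenPart φ hpar) := by
  obtain ⟨σ, hσ⟩ := exists_isAssocPerm (oddPart φ hpar)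
  refine ⟨σ, σ⁻¹ * finRotate n, hσ, isAssocPerm_of_forall fun b => ?_, rfl⟩
  obtain ⟨a, hσa, ha⟩ : ∃ a, σ a = finRotate n b ∧
      IsCyclicSucc (φ.part (evenEmb b)) (evenEmb b) (evenEmb a) := by
    by_cases hb : b.val + 1 = n
    · exact exists_cyclicSucc_of_last hpar hNC h2 hn hσ hb
    replace hb : b.val + 1 < n := by omega
    by_cases hmin : IsMinOf (oddEmb (finRotate n b)) (φ.part (oddEmb (finRotate n b)))
    · exact exists_cyclicSucc_of_min hpar hNC h2 hgap hσ hb hmin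
    simp only [IsMinOf, self_mem_part, true_and, not_forall, not_le, exists_prop] at hmin
    obtain ⟨p, hp, hpc⟩ := hmin
    exact exists_cyclicSucc_of_not_min hpar hgap hσ hb hp hpc
  have : (σ⁻¹ * finRotate n) b = a := by rw [Equiv.Perm.mul_apply, Equiv.Perm.inv_eq_iff_eq, hσa]
  rw [this]
  exact (isCyclicSucc_image_iff strictMono_evenEmb).1 (image_part_evenPart hpar b ▸ ha)

end KrewerasOfClosed

section Uniqueness

variable {m : ℕ} {θ ψ φ φ' : FP m} {A P Y : Finset (Fin m)}

lemma ll_self (θ : FP m) : Ll θ θ :=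
  ⟨fun B hB => ⟨B, hB, subset_rfl⟩, fun C hC =>
    have hC' := θ.nonempty_of_mem_parts hC
    ⟨C, hC, _, _, isMinOf_min' hC', isMaxOf_max' hC', min'_mem _ _, max'_mem _ _⟩⟩

lemma Ll.exists_subset_with_ends (hθφ' : Ll θ φ') (hθψ : Refines θ ψ) (hψφ' : Refines ψ φ')
    (hY : Y ∈ φ'.parts) {y₁ y₂ : Fin m} (hy₁ : IsMinOf y₁ Y) (hy₂ : IsMaxOf y₂ Y) :
    ∃ D ∈ ψ.parts, y₁ ∈ D ∧ y₂ ∈ D ∧ D ⊆ Y := by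
  obtain ⟨B, hB, x, y, hx, hy, hxB, hyB⟩ := hθφ'.2 Y hY
  rw [hx.unique hy₁] at hxB
  rw [hy.unique hy₂] at hyB
  obtain ⟨D, hD, hBD⟩ := hθψ B hB
  obtain ⟨Y', hY', hDY'⟩ := hψφ' D hD
  obtain rfl : Y' = Y := φ'.eq_of_mem_parts hY' hY (hDY' (hBD hxB)) hy₁.1
  exact ⟨D, hD, hBD hxB, hBD hyB, hDY'⟩

/-- If `A` and its parent `P` lay in different blocks of `φ'`, the gap of the block of `P`
around `A` would be spanned by a block of `φ'` containing a block of `ψ` that encloses `A` but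
not `P`. -/
lemma Refines.merge_of_gapFilled (hψφ' : Refines ψ φ') (hNC' : IsNC φ') (hgap' : GapFilled φ')
    (hpar' : ParityPreserving φ') (hθφ' : Ll θ φ') (hθψ : Refines θ ψ) (h : MergePair ψ A P) :
    Refines (merge ψ h.mem h.parent.mem) φ' := by
  intro B hB
  rcases (mem_merge_parts _ _).1 hB with rfl | ⟨hB, -, -⟩
  swap
  · exact hψφ' B hB
  obtain ⟨CA, hCA, hACA⟩ := hψφ' A h.mem
  obtain ⟨CP, hCP, hPCP⟩ := hψφ' P h.parent.mem
  suffices hCC : CA = CP from ⟨CP, hCP, union_subset (hCC ▸ hACA) hPCP⟩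
  by_contra hne
  obtain ⟨p₁, hp₁, p₂, hp₂, hPA⟩ := h.parent.encloses
  have hAne := ψ.nonempty_of_mem_parts h.mem
  obtain ⟨u, v, huv, hua, hav⟩ := hNC'.exists_adjacent_around hCP hCA (Ne.symm hne) hACA
    (h.parent.encloses.mono hPCP) (isMinOf_min' hAne) (isMaxOf_max' hAne)
  have hvp : v.val ≤ p₂.val := not_lt.1 fun hlt =>
    huv.2.2.2 p₂ (hPCP hp₂) ⟨hua.trans (hPA _ (min'_mem _ hAne)).2, hlt⟩
  have hu := hpar'.mod_two_eq hCP huv.1 (hPCP hp₁)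
  have hv := hpar'.mod_two_eq hCP huv.2.1 (hPCP hp₁)
  have ha₁ := h.sameParity.mod_two_eq (min'_mem _ hAne) hp₁
  have ha₂ := h.sameParity.mod_two_eq (max'_mem _ hAne) hp₁
  have hua' : u.val < (A.min' hAne).val := hua
  have hav' : (A.max' hAne).val < v.val := hav
  have ha₁₂ : (A.min' hAne).val ≤ (A.max' hAne).val := min'_le _ _ (max'_mem _ hAne)
  obtain ⟨Y, hY, y₁, y₂, hy₁, hy₂, hy₁v, hy₂v⟩ := hgap' CP hCP u v huv (by omega)
  obtain ⟨D, hD, hy₁D, hy₂D, hDY⟩ := hθφ'.exists_subset_with_ends hθψ hψφ' hY hy₁ hy₂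
  have hDA : StrictlyEncloses D A := by
    refine ⟨y₁, hy₁D, y₂, hy₂D, fun a ha => ⟨?_, ?_⟩⟩
    · have : (A.min' hAne).val ≤ a.val := min'_le _ a ha
      show y₁.val < a.val; omega
    · have : a.val ≤ (A.max' hAne).val := le_max' _ a ha
      show a.val < y₂.val; omega
  obtain ⟨_, _, d₂, hd₂, hDP⟩ := h.parent.innermost D hD hDA
  have h₁ : p₂.val ≤ d₂.val := (hDP p₂ hp₂).2
  have h₂ : d₂.val ≤ y₂.val := hy₂.2 d₂ (hDY hd₂)
  omega

/-- A block `C` of `φ'` and the block `D ⊆ C` of `φ` containing its ends agree: a point of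
`C \ D` would lie in a gap of `D`, whose spanning block would cross `C`. -/
lemma eq_of_refines_of_gapFilled (hgap : GapFilled φ) (hNC' : IsNC φ')
    (hpar' : ParityPreserving φ') (hθφ : Refines θ φ) (hφφ' : Refines φ φ') (hθφ' : Ll θ φ') :
    φ' = φ := by
  refine eq_of_parts_subset fun C hC => ?_
  have hCne := φ'.nonempty_of_mem_parts hC
  obtain ⟨D, hD, hxD, hyD, hDC⟩ :=
    hθφ'.exists_subset_with_ends hθφ hφφ' hC (isMinOf_min' hCne) (isMaxOf_max' hCne)
  suffices hCD : C = D by rwa [hCD]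
  refine Subset.antisymm (fun ξ hξ => by_contra fun hξD => ?_) hDC
  have hxξ := lt_of_le_of_ne (min'_le _ ξ hξ) fun h => hξD (h ▸ hxD)
  have hξy := lt_of_le_of_ne (le_max' _ ξ hξ) fun h => hξD (h ▸ hyD)
  obtain ⟨w₁, w₂, hw, -, hw₁ξ, hξw₂, -⟩ := exists_adjacent_around hxD hyD hxξ le_rfl hξy
    fun w hw ⟨h₁, h₂⟩ => hξD (le_antisymm h₂ h₁ ▸ hw)
  have h₁ := hpar'.mod_two_eq hC (hDC hw.1) hξ
  have h₂ := hpar'.mod_two_eq hC (hDC hw.2.1) hξ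
  have hw₁ξ' : w₁.val < ξ.val := hw₁ξ
  have hξw₂' : ξ.val < w₂.val := hξw₂
  obtain ⟨Y, hY, y₁, y₂, hy₁, hy₂, hy₁v, hy₂v⟩ := hgap D hD w₁ w₂ hw (by omega)
  obtain ⟨Y', hY', hYY'⟩ := hφφ' Y hY
  have hCY : C = Y' := hNC'.eq_of_crossing hC hY' (hDC hw.1) (hYY' hy₁.1) hξ (hYY' hy₂.1)
    (show w₁.val < y₁.val by omega) (show y₁.val < ξ.val by omega)
    (show ξ.val < y₂.val by omega)
  have := hpar'.mod_two_eq hC (hDC hw.1) (hCY ▸ hYY' hy₁.1)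
  omega

end Uniqueness

/-- Proposition 6.10: if `θ` is a parity-preserving partition in
`NC(2n)` with exactly two outer blocks, then there is a unique `π ∈ NC(n)` such that
`θ ≪ π^(odd) ∪ K(π)^(even)`. -/
theorem statement17 (n : ℕ) (hn : 0 < n) (θ : FP (2*n)) (hθNC : IsNC θ)
    (hθpar : ParityPreserving θ) (h2 : ExactlyTwoOuterBlocks θ) :
    (∃ π κ : FP n, IsNC π ∧ IsKrewerasPair π κ ∧
      ∃ φ : FP (2*n), IsOddEvenJoin π κ φ ∧ Ll θ φ) ∧
    (∀ π₁ κ₁ π₂ κ₂ : FP n, IsNC π₁ → IsKrewerasPair π₁ κ₁ →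
      IsNC π₂ → IsKrewerasPair π₂ κ₂ →
      (∃ φ : FP (2*n), IsOddEvenJoin π₁ κ₁ φ ∧ Ll θ φ) →
      (∃ φ : FP (2*n), IsOddEvenJoin π₂ κ₂ φ ∧ Ll θ φ) → π₁ = π₂) := by
  have hm : 0 < 2 * n := by omega
  have heven : 2 * n % 2 = 0 := by omega
  have hθ : Admissible θ θ := ⟨hθNC, hθpar, h2, ll_self θ⟩
  constructor
  · obtain ⟨φ, hφ, -, hcl⟩ :=
      exists_admissible_closed hm heven (fun _ => True) hθ trivial fun _ _ _ _ _ _ => trivial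
    have hgap := gapFilled_of_closed hφ.nc hφ.parity hcl
    exact ⟨_, _, isNC_oddPart hφ.parity hφ.nc,
      isKrewerasPair_of_closed hφ.parity hφ.nc hφ.twoOuter hgap hn,
      φ, isOddEvenJoin_oddPart_evenPart hφ.parity, hφ.ll⟩
  · rintro π₁ κ₁ π₂ κ₂ - hK₁ - hK₂ ⟨φ₁, hjoin₁, hll₁⟩ ⟨φ₂, hjoin₂, hll₂⟩
    have hgap₁ := hK₁.gapFilled hjoin₁
    have hgap₂ := hK₂.gapFilled hjoin₂
    obtain ⟨φ, hφ, ⟨hφ₁, hφ₂⟩, hcl⟩ := exists_admissible_closed hm heven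
      (fun ψ => Refines ψ φ₁ ∧ Refines ψ φ₂) hθ ⟨hll₁.1, hll₂.1⟩ fun ψ A P hψ hS h =>
        ⟨hS.1.merge_of_gapFilled hgap₁.isNC hgap₁ hjoin₁.parityPreserving hll₁ hψ.ll.1 h,
         hS.2.merge_of_gapFilled hgap₂.isNC hgap₂ hjoin₂.parityPreserving hll₂ hψ.ll.1 h⟩
    have hgap := gapFilled_of_closed hφ.nc hφ.parity hcl
    have e₁ := eq_of_refines_of_gapFilled hgap hgap₁.isNC hjoin₁.parityPreserving hφ.ll.1 hφ₁ hll₁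
    have e₂ := eq_of_refines_of_gapFilled hgap hgap₂.isNC hjoin₂.parityPreserving hφ.ll.1 hφ₂ hll₂
    exact hjoin₁.left_unique (e₁.trans e₂.symm ▸ hjoin₂)
end BBP
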